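/- arXiv:2009.10857 — 8 statements merged into one kernel-verified Lean document; each statement's English description precedes it below -/
import Mathlib

section
/- Each standard basis vector e_m is an exposed point of the unit ball K_N = {x ∈ R^N : δ(x) ≤ 1} of the Schinzel norm: the linear functional φ_m(x) = (1/2)(Σ_n x_n + x_m) satisfies φ_m(x) ≤ δ(x) for all x, with equality if and only if x = t e_m for some t ≥ 0. -/
open Finset in
/-- The Schinzel norm `δ(x) = max{Σ xₘ⁺, Σ xₙ⁻}` on `ℝ^N`. -/
noncomputable def schinzelDelta {N : ℕ} (x : Fin N → ℝ) : ℝ :=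
  max (∑ m, max (x m) 0) (∑ n, max (-(x n)) 0)

/-- The set `E_N = {±e_m}` of signed standard basis vectors. -/
def schE (N : ℕ) : Set (Fin N → ℝ) :=
  {x | ∃ m, x = Pi.single m 1 ∨ x = -Pi.single m 1}

/-- The set `F_N = {e_m − e_n : m ≠ n}`. -/
def schF (N : ℕ) : Set (Fin N → ℝ) :=
  {x | ∃ m n, m ≠ n ∧ x = Pi.single m 1 - Pi.single n 1}

open Finset in
/-- The `ℓ¹`-norm of the exterior product `x₁ ∧ ⋯ ∧ x_L`: the sum, over all
`L`-element subsets `I ⊆ {1,…,N}`, of the absolute values of the `L×L` minors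
(rows indexed by `I`) of the `N×L` matrix with columns `x₁,…,x_L`. -/
noncomputable def wedgeL1 {N L : ℕ} (x : Fin L → Fin N → ℝ) : ℝ :=
  ∑ I : Finset (Fin N), if h : I.card = L then
    |(Matrix.of fun i j => x j ((I.orderIsoOfFin h i : Fin N))).det| else 0

/-
Both sides are half-sums of elementary quantities: since `max P M = (P + M + |P - M|) / 2`,
with `P + M = ‖x‖₁` and `P - M = Σ xₙ`, we get `δ(x) = (‖x‖₁ + |Σ xₙ|) / 2`. Hence
`2 (δ(x) - φ_m(x)) = (‖x‖₁ - x_m) + (|Σ xₙ| - Σ xₙ)`, a sum of two nonnegative terms, and the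
first vanishes only on the ray through `e_m`, where the second vanishes as well.
-/

open Finset

section

variable {ι : Type*} [Fintype ι]

lemma apply_le_sum_abs (x : ι → ℝ) (m : ι) : x m ≤ ∑ n, |x n| :=
  (le_abs_self _).trans <| single_le_sum (fun n _ ↦ abs_nonneg (x n)) (mem_univ m)

lemma sum_abs_eq_apply_iff [DecidableEq ι] (x : ι → ℝ) (m : ι) :
    ∑ n, |x n| = x m ↔ ∃ t : ℝ, 0 ≤ t ∧ x = t • (Pi.single m 1 : ι → ℝ) := by
  constructor
  · intro h
    have hsplit := add_sum_erase univ (fun n ↦ |x n|) (mem_univ m)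
    have hrest : 0 ≤ ∑ n ∈ univ.erase m, |x n| := sum_nonneg fun n _ ↦ abs_nonneg (x n)
    have hm : |x m| = x m := le_antisymm (by linarith [le_abs_self (x m)]) (le_abs_self _)
    have hzero : ∀ n ∈ univ.erase m, |x n| = 0 :=
      (sum_eq_zero_iff_of_nonneg fun n _ ↦ abs_nonneg (x n)).mp (by linarith [le_abs_self (x m)])
    refine ⟨x m, abs_eq_self.mp hm, funext fun n ↦ ?_⟩
    by_cases hn : n = m
    · subst hn; simp
    · simpa [hn] using hzero n (mem_erase.mpr ⟨hn, mem_univ n⟩)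
  · rintro ⟨t, ht, rfl⟩
    simp [Pi.single_apply, apply_ite abs, abs_of_nonneg ht]

end

lemma schinzelDelta_eq {N : ℕ} (x : Fin N → ℝ) :
    schinzelDelta x = (∑ n, |x n| + |∑ n, x n|) / 2 := by
  have hsum : ∑ n, max (x n) 0 + ∑ n, max (-x n) 0 = ∑ n, |x n| := by
    simp only [← sum_add_distrib, max_zero_add_max_neg_zero_eq_abs_self]
  have hdiff : ∑ n, max (x n) 0 - ∑ n, max (-x n) 0 = ∑ n, x n := by
    simp only [← sum_sub_distrib, max_zero_sub_max_neg_zero_eq_self]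
  rw [schinzelDelta, ← hsum, ← hdiff, ← max_sub_min_eq_abs']
  linarith [min_add_max (∑ n, max (x n) 0) (∑ n, max (-x n) 0)]

/-- Each standard basis vector `e_m` is an exposed point of the Schinzel unit ball:
`φ_m(x) = ½(Σ xₙ + x_m)` satisfies `φ_m(x) ≤ δ(x)`, with equality iff `x = t e_m`, `t ≥ 0`. -/
theorem stmt2 (N : ℕ) (m : Fin N) :
    (∀ x : Fin N → ℝ, (1/2) * ((∑ n, x n) + x m) ≤ schinzelDelta x) ∧
    (∀ x : Fin N → ℝ, (1/2) * ((∑ n, x n) + x m) = schinzelDelta x ↔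
      ∃ t : ℝ, 0 ≤ t ∧ x = t • (Pi.single m 1 : Fin N → ℝ)) := by
  refine ⟨fun x ↦ ?_, fun x ↦ ?_⟩
  · rw [schinzelDelta_eq]
    linarith [apply_le_sum_abs x m, le_abs_self (∑ n, x n)]
  · rw [schinzelDelta_eq, ← sum_abs_eq_apply_iff]
    constructor
    · intro h
      linarith [apply_le_sum_abs x m, le_abs_self (∑ n, x n)]
    · intro h
      have hsum : ∑ n, x n = x m := by
        obtain ⟨t, -, rfl⟩ := (sum_abs_eq_apply_iff x m).mp h
        simp [Pi.single_apply]
      rw [hsum, ← h, abs_of_nonneg (sum_nonneg fun n _ ↦ abs_nonneg (x n))]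
      ring
end

section
/- Every point x on the boundary of the unit ball K_N of the Schinzel norm (i.e., with δ(x) = 1) is a convex combination of points from E_N ∪ F_N, where E_N = {±e_m : 1 ≤ m ≤ N} and F_N = {e_m − e_n : m ≠ n}. Explicitly, with σ^+ = Σ x_m^+ and σ^- = Σ x_n^-, x = (1−σ^-) Σ_m x_m^+ e_m + (1−σ^+) Σ_n x_n^- (−e_n) + Σ_{m≠n} x_m^+ x_n^- (e_m − e_n), and the coefficients are nonnegative and sum to 1. -/
open Finset

theorem posPart_mul_negPart {R : Type*} [Ring R] [LinearOrder R] [IsOrderedAddMonoid R] (a : R) :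
    a⁺ * a⁻ = 0 := by
  rcases le_total a 0 with h | h
  · rw [posPart_eq_zero.2 h, zero_mul]
  · rw [negPart_eq_zero.2 h, mul_zero]

section
variable {ι R : Type*} [Fintype ι] [DecidableEq ι] [CommRing R]

theorem sum_smul_single_one (p : ι → R) : ∑ m, p m • (Pi.single m 1 : ι → R) = p := by
  simpa [← Pi.single_smul'] using univ_sum_single p

theorem sum_sum_mul_smul_single_sub_single (p q : ι → R) :
    ∑ m, ∑ n, (p m * q n) • (Pi.single m 1 - Pi.single n 1 : ι → R)
      = (∑ n, q n) • p - (∑ m, p m) • q := by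
  have hp (m : ι) : ∑ n, (p m * q n) • (Pi.single m 1 : ι → R)
      = (∑ n, q n) • p m • Pi.single m 1 := by
    rw [← sum_smul, ← mul_sum, mul_comm, mul_smul]
  have hq (n : ι) : ∑ m, (p m * q n) • (Pi.single n 1 : ι → R)
      = (∑ m, p m) • q n • Pi.single n 1 := by
    rw [← sum_smul, ← sum_mul, mul_smul]
  simp only [smul_sub, sum_sub_distrib, hp]
  rw [sum_comm (f := fun m n => (p m * q n) • (Pi.single n 1 : ι → R))]
  simp only [hq, ← smul_sum, sum_smul_single_one]

theorem sum_sum_sdiff_mul_smul_single_sub_single (p q : ι → R) :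
    ∑ m, ∑ n ∈ univ \ {m}, (p m * q n) • (Pi.single m 1 - Pi.single n 1 : ι → R)
      = (∑ n, q n) • p - (∑ m, p m) • q := by
  rw [← sum_sum_mul_smul_single_sub_single]
  refine sum_congr rfl fun m _ => ?_
  rw [sdiff_singleton_eq_erase, sum_erase _ (by rw [sub_self, smul_zero])]

theorem sum_sum_sdiff_mul_of_mul_self_eq_zero {p q : ι → R} (hpq : ∀ m, p m * q m = 0) :
    ∑ m, ∑ n ∈ univ \ {m}, p m * q n = (∑ m, p m) * ∑ n, q n := by
  rw [sum_mul_sum]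
  refine sum_congr rfl fun m _ => ?_
  rw [sdiff_singleton_eq_erase]
  exact sum_erase _ (hpq m)

theorem sub_eq_weighted_sum_single_sub_single (p q : ι → R) :
    p - q = (1 - ∑ n, q n) • (∑ m, p m • (Pi.single m 1 : ι → R))
      + (1 - ∑ m, p m) • (∑ n, q n • (-(Pi.single n 1 : ι → R)))
      + ∑ m, ∑ n ∈ univ \ {m}, (p m * q n) • ((Pi.single m 1 : ι → R) - Pi.single n 1) := by
  simp only [smul_neg, sum_neg_distrib, sum_smul_single_one,
    sum_sum_sdiff_mul_smul_single_sub_single]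
  module

end

open Finset in
/-- Every point on the boundary of the Schinzel unit ball is the stated explicit convex
combination of points of `E_N ∪ F_N`; the coefficients are nonnegative and sum to `1`. -/
theorem stmt4 (N : ℕ) (x : Fin N → ℝ) (hx : schinzelDelta x = 1) :
    x = (1 - ∑ n, max (-(x n)) 0) • (∑ m, max (x m) 0 • (Pi.single m 1 : Fin N → ℝ))
      + (1 - ∑ m, max (x m) 0) • (∑ n, max (-(x n)) 0 • (-(Pi.single n 1 : Fin N → ℝ)))
      + ∑ m, ∑ n ∈ Finset.univ \ {m}, (max (x m) 0 * max (-(x n)) 0) •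
          ((Pi.single m 1 : Fin N → ℝ) - Pi.single n 1)
    ∧ 0 ≤ 1 - ∑ n, max (-(x n)) 0
    ∧ 0 ≤ 1 - ∑ m, max (x m) 0
    ∧ (1 - ∑ n, max (-(x n)) 0) * (∑ m, max (x m) 0)
      + (1 - ∑ m, max (x m) 0) * (∑ n, max (-(x n)) 0)
      + ∑ m, ∑ n ∈ Finset.univ \ {m}, max (x m) 0 * max (-(x n)) 0 = 1 := by
  have hmax : max (∑ m, max (x m) 0) (∑ n, max (-(x n)) 0) = 1 := hx
  obtain ⟨hP, hQ⟩ := max_le_iff.1 hmax.le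
  have hone := (max_choice _ _).imp (· ▸ hmax) (· ▸ hmax)
  refine ⟨?_, sub_nonneg.2 hQ, sub_nonneg.2 hP, ?_⟩
  · conv_lhs => rw [← posPart_sub_negPart x]
    exact sub_eq_weighted_sum_single_sub_single x⁺ x⁻
  · rw [sum_sum_sdiff_mul_of_mul_self_eq_zero (p := fun m => max (x m) 0)
      (q := fun n => max (-(x n)) 0) fun m => posPart_mul_negPart (x m)]
    rcases hone with h | h <;> rw [h] <;> ring
end

section
/- The set of extreme points of the unit ball K_N = {x ∈ R^N : δ(x) ≤ 1} of the Schinzel norm is exactly E_N ∪ F_N = {±e_m : 1 ≤ m ≤ N} ∪ {e_m − e_n : m ≠ n}. In particular, K_N has exactly N^2 + N extreme points. -/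
/-!
Writing `P(x) = Σ xᵢ⁺`, we have `δ(x) = max (P x) (P (-x))`. Moving mass between two positive
coordinates of `x`, or rescaling the only one, changes the sign of no coordinate, so along such
a perturbation `v` both `P(x ± v)` and `P(-(x ± v))` are affine in `v`; extremality therefore
forces at most one positive coordinate, equal to `1`, and symmetrically at most one negative
coordinate, equal to `-1`; the origin is the midpoint of `±eₘ`. Conversely `eₘ` and `eₘ - eₙ` are
the unique maximisers on `K_N` of `y ↦ yₘ + Σ y` and `y ↦ yₘ - yₙ`, and `K_N = -K_N`.
Putting `e_none = 0`, the extreme points are the `e_a - e_b` with `a ≠ b` in `Option (Fin N)`,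
hence there are `(N + 1)² - (N + 1)` of them.
-/

open Finset

section PosSum

variable {ι : Type*} [Fintype ι]

noncomputable def posSum (x : ι → ℝ) : ℝ := ∑ i, max (x i) 0

lemma posSum_nonneg (x : ι → ℝ) : 0 ≤ posSum x :=
  sum_nonneg fun _ _ => le_max_right _ _

lemma le_posSum (x : ι → ℝ) (i : ι) : x i ≤ posSum x :=
  (le_max_left _ _).trans <| single_le_sum (f := fun i => max (x i) 0)
    (fun _ _ => le_max_right _ _) (mem_univ i)

lemma sum_eq_posSum_sub_posSum_neg (x : ι → ℝ) : ∑ i, x i = posSum x - posSum (-x) := by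
  simp only [posSum, Pi.neg_apply, ← sum_sub_distrib, max_zero_sub_max_neg_zero_eq_self]

lemma nonpos_of_posSum_le {x : ι → ℝ} {i j : ι} (hx : posSum x ≤ x i) (hji : j ≠ i) :
    x j ≤ 0 := by
  have := add_le_sum (f := fun i => max (x i) 0) (fun _ _ => le_max_right _ _)
    (mem_univ i) (mem_univ j) hji.symm
  have := le_max_left (x j) 0
  have := le_max_left (x i) 0
  simp only [posSum] at hx
  linarith

lemma posSum_single [DecidableEq ι] (i : ι) (a : ℝ) : posSum (Pi.single i a) = max a 0 := by
  simp [posSum, Pi.single_apply, apply_ite (max · (0 : ℝ))]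

lemma posSum_add_of_abs_le {x v : ι → ℝ} (hv : ∀ i, |v i| ≤ max (x i) 0) :
    posSum (x + v) = posSum x + ∑ i, v i := by
  simp only [posSum, ← sum_add_distrib]
  refine sum_congr rfl fun i _ => ?_
  have := abs_le.1 (hv i)
  simp only [Pi.add_apply]
  rcases le_total (x i) 0 with h | h
  · rw [max_eq_right h] at this
    rw [show v i = 0 by linarith, add_zero, add_zero]
  · rw [max_eq_left h] at this
    rw [max_eq_left h, max_eq_left (by linarith)]

lemma posSum_neg_add_of_abs_le {x v : ι → ℝ} (hv : ∀ i, |v i| ≤ max (x i) 0) :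
    posSum (-(x + v)) = posSum (-x) := by
  refine sum_congr rfl fun i _ => ?_
  have := abs_le.1 (hv i)
  simp only [Pi.neg_apply, Pi.add_apply]
  rcases le_total (x i) 0 with h | h
  · rw [max_eq_right h] at this
    rw [show v i = 0 by linarith, add_zero]
  · rw [max_eq_left h] at this
    rw [max_eq_right (by linarith), max_eq_right (by linarith)]

end PosSum

def schinzelBall (N : ℕ) : Set (Fin N → ℝ) := {x | schinzelDelta x ≤ 1}

namespace schinzelBall

variable {N : ℕ}

lemma mem_iff {x : Fin N → ℝ} : x ∈ schinzelBall N ↔ posSum x ≤ 1 ∧ posSum (-x) ≤ 1 :=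
  max_le_iff (a := posSum x)

lemma neg_mem {x : Fin N → ℝ} (hx : x ∈ schinzelBall N) : -x ∈ schinzelBall N := by
  rw [mem_iff, neg_neg] at *
  exact hx.symm

lemma single_mem (m : Fin N) : Pi.single m 1 ∈ schinzelBall N := by
  rw [mem_iff, ← Pi.single_neg, posSum_single, posSum_single]
  norm_num

lemma posSum_single_sub_single {m n : Fin N} (hmn : m ≠ n) :
    posSum (Pi.single m 1 - Pi.single n 1) = 1 := by
  rw [posSum, sum_eq_single m (fun k _ hk => ?_) (by simp)]
  · simp [hmn]
  · have : 0 ≤ (Pi.single n 1 : Fin N → ℝ) k := by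
      rw [Pi.single_apply]; split_ifs <;> norm_num
    rw [Pi.sub_apply, Pi.single_eq_of_ne hk, zero_sub, max_eq_right (neg_nonpos.2 this)]

lemma single_sub_single_mem {m n : Fin N} (hmn : m ≠ n) :
    Pi.single m 1 - Pi.single n 1 ∈ schinzelBall N := by
  rw [mem_iff, neg_sub, posSum_single_sub_single hmn, posSum_single_sub_single hmn.symm]
  norm_num

lemma neg_mem_extremePoints {x : Fin N → ℝ} (hx : x ∈ (schinzelBall N).extremePoints ℝ) :
    -x ∈ (schinzelBall N).extremePoints ℝ := by
  have hK : LinearEquiv.neg ℝ '' schinzelBall N = schinzelBall N := by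
    ext y
    refine ⟨?_, fun hy => ⟨-y, neg_mem hy, neg_neg y⟩⟩
    rintro ⟨y, hy, rfl⟩
    exact neg_mem hy
  rw [← hK, ← image_extremePoints]
  exact ⟨x, hx, rfl⟩

lemma zero_notMem_extremePoints (m : Fin N) : 0 ∉ (schinzelBall N).extremePoints ℝ := by
  intro h
  have hseg : (0 : Fin N → ℝ) ∈ openSegment ℝ (Pi.single m 1) (-Pi.single m 1) :=
    ⟨1 / 2, 1 / 2, by norm_num, by norm_num, by norm_num, by module⟩
  simpa using congrFun (h.2 (single_mem m) (neg_mem (single_mem m)) hseg) m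

lemma eq_zero_of_mem_extremePoints {x v : Fin N → ℝ} (hx : x ∈ (schinzelBall N).extremePoints ℝ)
    (hv : ∀ i, |v i| ≤ max (x i) 0) (hsum : posSum x + |∑ i, v i| ≤ 1) : v = 0 := by
  have hmem : ∀ w : Fin N → ℝ, (∀ i, |w i| ≤ max (x i) 0) → |∑ i, w i| = |∑ i, v i| →
      x + w ∈ schinzelBall N := by
    intro w hw hsw
    rw [mem_iff, posSum_add_of_abs_le hw, posSum_neg_add_of_abs_le hw]
    exact ⟨by linarith [le_abs_self (∑ i, w i)], (mem_iff.1 hx.1).2⟩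
  have hseg : x ∈ openSegment ℝ (x + v) (x + -v) :=
    ⟨1 / 2, 1 / 2, by norm_num, by norm_num, by norm_num, by module⟩
  simpa using hx.2 (hmem v hv rfl) (hmem (-v) (by simpa using hv) (by simp [abs_neg])) hseg

lemma nonpos_of_mem_extremePoints_of_pos {x : Fin N → ℝ}
    (hx : x ∈ (schinzelBall N).extremePoints ℝ) {m k : Fin N} (hm : 0 < x m) (hkm : k ≠ m) :
    x k ≤ 0 := by
  by_contra! hk
  set ε := min (x m) (x k)
  have hε : 0 < ε := lt_min hm hk
  have hv := eq_zero_of_mem_extremePoints hx (v := Pi.single m ε - Pi.single k ε) ?_ ?_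
  · simpa [hkm.symm, hε.ne'] using congrFun hv m
  · intro i
    rcases eq_or_ne i m with rfl | him
    · simpa [hkm.symm, abs_of_pos hε] using .inl (min_le_left _ _)
    rcases eq_or_ne i k with rfl | hik
    · simpa [him, abs_of_pos hε] using .inl (min_le_right _ _)
    · simp [him, hik]
  · simpa [sum_sub_distrib] using (mem_iff.1 hx.1).1

lemma eq_one_of_mem_extremePoints_of_pos {x : Fin N → ℝ}
    (hx : x ∈ (schinzelBall N).extremePoints ℝ) {m : Fin N} (hm : 0 < x m) : x m = 1 := by
  have hsum : posSum x = x m := by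
    rw [posSum, sum_eq_single m (fun k _ hk => max_eq_right
      (nonpos_of_mem_extremePoints_of_pos hx hm hk)) (by simp), max_eq_left hm.le]
  have hle : x m ≤ 1 := hsum ▸ (mem_iff.1 hx.1).1
  by_contra hne
  set ε := min (x m) (1 - x m)
  have hε : 0 < ε := lt_min hm (by grind)
  have hv := eq_zero_of_mem_extremePoints hx (v := Pi.single m ε) ?_ ?_
  · simpa [hε.ne'] using congrFun hv m
  · intro i
    rcases eq_or_ne i m with rfl | him
    · simpa [abs_of_pos hε] using .inl (min_le_left _ _)
    · simp [him]
  · have : ε ≤ 1 - x m := min_le_right _ _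
    rw [hsum, sum_pi_single', if_pos (mem_univ m), abs_of_pos hε]
    linarith

lemma nonneg_of_mem_extremePoints_of_neg {x : Fin N → ℝ}
    (hx : x ∈ (schinzelBall N).extremePoints ℝ) {n k : Fin N} (hn : x n < 0) (hkn : k ≠ n) :
    0 ≤ x k :=
  neg_nonpos.1 <| nonpos_of_mem_extremePoints_of_pos (neg_mem_extremePoints hx)
    (neg_pos.2 hn) hkn

lemma eq_neg_one_of_mem_extremePoints_of_neg {x : Fin N → ℝ}
    (hx : x ∈ (schinzelBall N).extremePoints ℝ) {n : Fin N} (hn : x n < 0) : x n = -1 :=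
  neg_eq_iff_eq_neg.1 <| eq_one_of_mem_extremePoints_of_pos (neg_mem_extremePoints hx)
    (neg_pos.2 hn)

lemma extremePoints_subset_schE_union_schF (m₀ : Fin N) :
    (schinzelBall N).extremePoints ℝ ⊆ schE N ∪ schF N := by
  intro x hx
  by_cases hp : ∃ m, 0 < x m <;> by_cases hn : ∃ n, x n < 0
  · obtain ⟨m, hm⟩ := hp
    obtain ⟨n, hn⟩ := hn
    have hmn : m ≠ n := by rintro rfl; linarith
    refine .inr ⟨m, n, hmn, funext fun k => ?_⟩
    rcases eq_or_ne k m with rfl | hkm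
    · simp [eq_one_of_mem_extremePoints_of_pos hx hm, hmn]
    rcases eq_or_ne k n with rfl | hkn
    · simp [eq_neg_one_of_mem_extremePoints_of_neg hx hn, hkm]
    · simpa [hkm, hkn] using le_antisymm (nonpos_of_mem_extremePoints_of_pos hx hm hkm)
        (nonneg_of_mem_extremePoints_of_neg hx hn hkn)
  · obtain ⟨m, hm⟩ := hp
    push Not at hn
    refine .inl ⟨m, .inl (funext fun k => ?_)⟩
    rcases eq_or_ne k m with rfl | hkm
    · simp [eq_one_of_mem_extremePoints_of_pos hx hm]
    · simpa [hkm] using le_antisymm (nonpos_of_mem_extremePoints_of_pos hx hm hkm) (hn k)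
  · obtain ⟨n, hn⟩ := hn
    push Not at hp
    refine .inl ⟨n, .inr (funext fun k => ?_)⟩
    rcases eq_or_ne k n with rfl | hkn
    · simp [eq_neg_one_of_mem_extremePoints_of_neg hx hn]
    · simpa [hkn] using le_antisymm (hp k) (nonneg_of_mem_extremePoints_of_neg hx hn hkn)
  · push Not at hp hn
    obtain rfl : x = 0 := funext fun k => le_antisymm (hp k) (hn k)
    exact absurd hx (zero_notMem_extremePoints m₀)

lemma single_mem_exposedPoints (m : Fin N) :
    Pi.single m 1 ∈ (schinzelBall N).exposedPoints ℝ := by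
  refine ⟨single_mem m, .proj (R := ℝ) (φ := fun _ => ℝ) m + ∑ k, .proj k, fun y hy => ?_⟩
  obtain ⟨hy₁, hy₂⟩ := mem_iff.1 hy
  have hsum := sum_eq_posSum_sub_posSum_neg y
  have hym := le_posSum y m
  have hneg := posSum_nonneg (-y)
  simp only [_root_.add_apply, _root_.sum_apply, ContinuousLinearMap.proj_apply,
    Pi.single_eq_same, sum_pi_single', mem_univ, if_true]
  refine ⟨by linarith, fun h => funext fun k => ?_⟩
  rcases eq_or_ne k m with rfl | hkm
  · simp only [Pi.single_eq_same]
    linarith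
  · rw [Pi.single_eq_of_ne hkm]
    exact le_antisymm (nonpos_of_posSum_le (by linarith) hkm)
      (by linarith [le_posSum (-y) k, Pi.neg_apply y k])

lemma single_sub_single_mem_exposedPoints {m n : Fin N} (hmn : m ≠ n) :
    Pi.single m 1 - Pi.single n 1 ∈ (schinzelBall N).exposedPoints ℝ := by
  refine ⟨single_sub_single_mem hmn, .proj (R := ℝ) (φ := fun _ => ℝ) m - .proj n,
    fun y hy => ?_⟩
  obtain ⟨hy₁, hy₂⟩ := mem_iff.1 hy
  have hym := le_posSum y m
  have hyn : -y n ≤ posSum (-y) := le_posSum (-y) n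
  simp only [_root_.sub_apply, ContinuousLinearMap.proj_apply, Pi.sub_apply, Pi.single_eq_same,
    Pi.single_eq_of_ne hmn, Pi.single_eq_of_ne hmn.symm]
  refine ⟨by linarith, fun h => funext fun k => ?_⟩
  rcases eq_or_ne k m with rfl | hkm
  · simp only [Pi.sub_apply, Pi.single_eq_same, Pi.single_eq_of_ne hmn]
    linarith
  rcases eq_or_ne k n with rfl | hkn
  · simp only [Pi.sub_apply, Pi.single_eq_same, Pi.single_eq_of_ne hkm]
    linarith
  · have hk := nonpos_of_posSum_le (x := -y) (i := n) (by rw [Pi.neg_apply]; linarith) hkn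
    rw [Pi.neg_apply] at hk
    rw [Pi.sub_apply, Pi.single_eq_of_ne hkm, Pi.single_eq_of_ne hkn, sub_zero]
    linarith [nonpos_of_posSum_le (by linarith) hkm]

end schinzelBall

section UnitVecOrZero

variable {ι : Type*} [DecidableEq ι]

def unitVecOrZero : Option ι → ι → ℝ
  | none => 0
  | some i => Pi.single i 1

lemma unitVecOrZero_sub_apply_eq_one_iff {a b : Option ι} (hab : a ≠ b) (i : ι) :
    (unitVecOrZero a - unitVecOrZero b) i = 1 ↔ a = some i := by
  cases a <;> cases b <;> simp [unitVecOrZero, Pi.single_apply] at hab ⊢ <;> grind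

lemma injOn_unitVecOrZero_sub :
    {p : Option ι × Option ι | p.1 ≠ p.2}.InjOn
      fun p => unitVecOrZero p.1 - unitVecOrZero p.2 := by
  rintro ⟨a, b⟩ hab ⟨c, d⟩ hcd h
  have h' : unitVecOrZero b - unitVecOrZero a = unitVecOrZero d - unitVecOrZero c := by
    simpa using congrArg Neg.neg h
  refine Prod.ext (Option.ext fun i => ?_) (Option.ext fun i => ?_)
  · rw [← unitVecOrZero_sub_apply_eq_one_iff hab, ← unitVecOrZero_sub_apply_eq_one_iff hcd]
    exact Eq.congr_left (congrFun h i)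
  · rw [← unitVecOrZero_sub_apply_eq_one_iff (Ne.symm hab),
      ← unitVecOrZero_sub_apply_eq_one_iff (Ne.symm hcd)]
    exact Eq.congr_left (congrFun h' i)

end UnitVecOrZero

lemma schE_union_schF_eq_image (N : ℕ) :
    schE N ∪ schF N = (fun p : Option (Fin N) × Option (Fin N) =>
      unitVecOrZero p.1 - unitVecOrZero p.2) '' {p | p.1 ≠ p.2} := by
  ext x
  constructor
  · rintro (⟨m, rfl | rfl⟩ | ⟨m, n, hmn, rfl⟩)
    · exact ⟨(some m, none), by simp, sub_zero _⟩
    · exact ⟨(none, some m), by simp, zero_sub _⟩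
    · exact ⟨(some m, some n), by simpa using hmn, rfl⟩
  · rintro ⟨⟨_ | m, _ | n⟩, hab, rfl⟩
    · exact absurd rfl hab
    · exact .inl ⟨n, .inr (zero_sub _)⟩
    · exact .inl ⟨m, .inl (sub_zero _)⟩
    · exact .inr ⟨m, n, by simpa using hab, rfl⟩

lemma card_offDiag_option_fin (N : ℕ) :
    Nat.card {p : Option (Fin N) × Option (Fin N) | p.1 ≠ p.2} = N ^ 2 + N := by
  rw [show {p : Option (Fin N) × Option (Fin N) | p.1 ≠ p.2} =
      ((univ : Finset (Option (Fin N))).offDiag : Set _) by ext; simp,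
    Nat.card_coe_set_eq, Set.ncard_coe_finset, offDiag_card, card_univ, Fintype.card_option,
    Fintype.card_fin]
  exact Nat.sub_eq_of_eq_add (by ring)

/-- The set of extreme points of the Schinzel unit ball `K_N` is exactly
`E_N ∪ F_N`, and it has exactly `N² + N` elements. -/
theorem stmt5 (N : ℕ) (hN : 1 ≤ N) :
    Set.extremePoints ℝ {x : Fin N → ℝ | schinzelDelta x ≤ 1} = schE N ∪ schF N ∧
    Nat.card ↥(schE N ∪ schF N) = N ^ 2 + N := by
  refine ⟨subset_antisymm (schinzelBall.extremePoints_subset_schE_union_schF ⟨0, hN⟩) ?_, ?_⟩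
  · rintro x (⟨m, rfl | rfl⟩ | ⟨m, n, hmn, rfl⟩)
    · exact exposedPoints_subset_extremePoints (schinzelBall.single_mem_exposedPoints m)
    · exact schinzelBall.neg_mem_extremePoints
        (exposedPoints_subset_extremePoints (schinzelBall.single_mem_exposedPoints m))
    · exact exposedPoints_subset_extremePoints
        (schinzelBall.single_sub_single_mem_exposedPoints hmn)
  · rw [schE_union_schF_eq_image, Nat.card_image_of_injOn injOn_unitVecOrZero_sub,
      card_offDiag_option_fin]
end

section
/- Let x_1, ..., x_N be column vectors in R^N. Then |det(x_1 x_2 ⋯ x_N)| ≤ δ(x_1) δ(x_2) ⋯ δ(x_N), where δ is the Schinzel norm. -/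
/-!
Write `x = p - q` with `p, q ≥ 0` its positive and negative parts, `c = Σ p`, `d = Σ q`, so that
`δ(x) = max c d`. Then `x` is a nonnegative combination of total weight `δ(x)` of the vectors
`e_m - e_n` (weight `p_m q_n / δ(x)`), `e_m` (weight `p_m (1 - d / δ(x))`) and `-e_n`
(weight `q_n (1 - c / δ(x))`). Expanding `det X` multilinearly in the columns bounds `|det X|` by
`∏ δ(x_j)` times the largest `|det V|` over matrices `V` whose columns are such vectors. Such a `V`
is the transpose of an incidence matrix of a directed graph with half-edges, so `|det V| ≤ 1`:
if every column sums to zero, `det V = 0`; otherwise some column is `±e_m`, and we expand along it.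
-/

open Finset Matrix

def IsEdgeVector {ι R : Type*} [Ring R] (r : ι → R) : Prop :=
  ∃ P Q : Set ι, P.Subsingleton ∧ Q.Subsingleton ∧ r = P.indicator 1 - Q.indicator 1

namespace IsEdgeVector

variable {ι κ R : Type*} [Ring R] {r : ι → R}

lemma comp (hr : IsEdgeVector r) {f : κ → ι} (hf : f.Injective) : IsEdgeVector (r ∘ f) := by
  obtain ⟨P, Q, hP, hQ, rfl⟩ := hr
  refine ⟨f ⁻¹' P, f ⁻¹' Q, hP.preimage hf, hQ.preimage hf, ?_⟩
  ext j
  simp [← Set.indicator_comp_right, Pi.one_comp]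

variable [DecidableEq ι]

lemma single (m : ι) : IsEdgeVector (Pi.single m (1 : R)) :=
  ⟨{m}, ∅, Set.subsingleton_singleton, Set.subsingleton_empty, by ext; simp⟩

lemma neg_single (m : ι) : IsEdgeVector (-Pi.single m (1 : R)) :=
  ⟨∅, {m}, Set.subsingleton_empty, Set.subsingleton_singleton, by ext; simp⟩

lemma single_sub_single (m n : ι) : IsEdgeVector (Pi.single m 1 - Pi.single n 1 : ι → R) :=
  ⟨{m}, {n}, Set.subsingleton_singleton, Set.subsingleton_singleton, by simp⟩

lemma exists_eq_single_of_sum_ne_zero [Fintype ι] (hr : IsEdgeVector r) (hs : ∑ j, r j ≠ 0) :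
    ∃ m, r = Pi.single m 1 ∨ r = -Pi.single m 1 := by
  obtain ⟨P, Q, hP, hQ, rfl⟩ := hr
  rcases hP.eq_empty_or_singleton with rfl | ⟨a, rfl⟩ <;>
    rcases hQ.eq_empty_or_singleton with rfl | ⟨b, rfl⟩
  · simp at hs
  · exact ⟨b, Or.inr (by ext; simp)⟩
  · exact ⟨a, Or.inl (by ext; simp)⟩
  · simp at hs

end IsEdgeVector

namespace Matrix

variable {R : Type*} [CommRing R]

lemma det_eq_zero_of_sum_row_eq_zero {n : Type*} [Fintype n] [DecidableEq n] [Nonempty n]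
    (M : Matrix n n R) (h : ∀ i, ∑ j, M i j = 0) : M.det = 0 :=
  det_eq_zero_of_mulVec_eq_zero_of_mem_nonZeroDivisors (v := fun _ => 1)
    (funext fun i => by simpa [mulVec, dotProduct] using h i) (i := Classical.arbitrary n)
    (Submonoid.one_mem _)

lemma det_eq_of_row_eq_single {n : ℕ} (M : Matrix (Fin (n + 1)) (Fin (n + 1)) R)
    {i m : Fin (n + 1)} {s : R} (h : M i = Pi.single m s) :
    M.det = (-1) ^ (i + m : ℕ) * s * (M.submatrix i.succAbove m.succAbove).det := by
  rw [det_succ_row M i, Fintype.sum_eq_single m fun k hk => by simp [h, hk]]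
  simp [h]

lemma det_of_sum_smul {n κ : Type*} [Fintype n] [DecidableEq n] [Fintype κ]
    (a : n → κ → R) (v : n → κ → n → R) :
    (of fun j => ∑ k, a j k • v j k).det =
      ∑ r : n → κ, (∏ j, a j (r j)) * (of fun j => v j (r j)).det := by
  have h := (detRowAlternating : (n → R) [⋀^n]→ₗ[R] R).toMultilinearMap.map_sum
    fun j k => a j k • v j k
  simp only [MultilinearMap.map_smul_univ, smul_eq_mul] at h
  exact h

variable [LinearOrder R] [IsStrictOrderedRing R]

lemma abs_det_le_one_of_isEdgeVector :
    ∀ {n : ℕ} (M : Matrix (Fin n) (Fin n) R), (∀ i, IsEdgeVector (M i)) → |M.det| ≤ 1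
  | 0, M, _ => by simp
  | n + 1, M, hM => by
    by_cases hsum : ∀ i, ∑ j, M i j = 0
    · simp [det_eq_zero_of_sum_row_eq_zero M hsum]
    push Not at hsum
    obtain ⟨i, hi⟩ := hsum
    obtain ⟨m, hm⟩ := (hM i).exists_eq_single_of_sum_ne_zero hi
    have hminor : |(M.submatrix i.succAbove m.succAbove).det| ≤ 1 :=
      abs_det_le_one_of_isEdgeVector _ fun k => (hM _).comp Fin.succAbove_right_injective
    rw [← Pi.single_neg] at hm
    rcases hm with hm | hm <;> simpa [det_eq_of_row_eq_single M hm] using hminor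

lemma abs_det_le_prod_sum_of_isEdgeVector {n : ℕ} {κ : Type*} [Fintype κ]
    (a : Fin n → κ → R) (v : Fin n → κ → Fin n → R) (ha : ∀ j k, 0 ≤ a j k)
    (hv : ∀ j k, IsEdgeVector (v j k)) :
    |(of fun j => ∑ k, a j k • v j k).det| ≤ ∏ j, ∑ k, a j k := by
  rw [det_of_sum_smul, Fintype.prod_sum]
  refine (Finset.abs_sum_le_sum_abs _ _).trans (sum_le_sum fun r _ => ?_)
  have hprod : 0 ≤ ∏ j, a j (r j) := prod_nonneg fun j _ => ha j (r j)
  rw [abs_mul, abs_of_nonneg hprod]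
  exact mul_le_of_le_one_right hprod (abs_det_le_one_of_isEdgeVector _ fun j => hv j (r j))

end Matrix

lemma mul_div_max_eq_min {K : Type*} [Field K] [LinearOrder K] [IsStrictOrderedRing K]
    {c d : K} (hc : 0 ≤ c) (hd : 0 ≤ d) : c * d / max c d = min c d := by
  rcases eq_or_lt_of_le (le_max_of_le_left hc : 0 ≤ max c d) with h | h
  · have hmin : min c d = 0 := le_antisymm (h ▸ min_le_max) (le_min hc hd)
    rw [← h, div_zero, hmin]
  · rw [← min_mul_max, mul_div_cancel_right₀ _ h.ne']

lemma exists_isEdgeVector_combination_weight_eq_schinzelDelta {N : ℕ} (x : Fin N → ℝ) :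
    ∃ (a : Fin N × Fin N ⊕ Fin N ⊕ Fin N → ℝ) (v : Fin N × Fin N ⊕ Fin N ⊕ Fin N → Fin N → ℝ),
      (∀ k, 0 ≤ a k) ∧ (∀ k, IsEdgeVector (v k)) ∧ ∑ k, a k = schinzelDelta x ∧
        ∑ k, a k • v k = x := by
  set p : Fin N → ℝ := fun i => max (x i) 0
  set q : Fin N → ℝ := fun i => max (-x i) 0
  set c := ∑ i, p i
  set d := ∑ i, q i
  set s := max c d
  have hp : ∀ i, 0 ≤ p i := fun i => le_max_right _ _
  have hq : ∀ i, 0 ≤ q i := fun i => le_max_right _ _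
  have hc : 0 ≤ c := sum_nonneg fun i _ => hp i
  have hd : 0 ≤ d := sum_nonneg fun i _ => hq i
  have hs : 0 ≤ s := le_max_of_le_left hc
  refine ⟨Sum.elim (fun mn => p mn.1 * q mn.2 / s)
      (Sum.elim (fun m => p m * (1 - d / s)) (fun n => q n * (1 - c / s))),
    Sum.elim (fun mn => Pi.single mn.1 1 - Pi.single mn.2 1)
      (Sum.elim (fun m => Pi.single m 1) (fun n => -Pi.single n 1)), ?_, ?_, ?_, ?_⟩
  · rintro (⟨m, n⟩ | m | n)
    · exact div_nonneg (mul_nonneg (hp m) (hq n)) hs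
    · exact mul_nonneg (hp m) (sub_nonneg.2 (div_le_one_of_le₀ (le_max_right c d) hs))
    · exact mul_nonneg (hq n) (sub_nonneg.2 (div_le_one_of_le₀ (le_max_left c d) hs))
  · rintro (⟨m, n⟩ | m | n)
    · exact .single_sub_single m n
    · exact .single m
    · exact .neg_single n
  · simp only [Fintype.sum_sum_type, Fintype.sum_prod_type, Sum.elim_inl, Sum.elim_inr,
      ← sum_mul, ← mul_sum, ← sum_div]
    have hmin : c * d / s = min c d := mul_div_max_eq_min hc hd
    have hmax : min c d + s = c + d := min_add_max c d
    change c * d / s + (c * (1 - d / s) + d * (1 - c / s)) = s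
    linear_combination -hmin - hmax
  · ext i
    simp only [mul_sub, mul_one, Finset.sum_apply, Pi.smul_apply, smul_eq_mul,
      Fintype.sum_sum_type, Sum.elim_inl, Pi.sub_apply, Pi.single_apply, mul_ite, mul_zero,
      sum_sub_distrib, Fintype.sum_prod_type, sum_ite_irrel, ← sum_div, ← mul_sum,
      sum_const_zero, sum_ite_eq, mem_univ, ↓reduceIte, ← sum_mul, Sum.elim_inr, Pi.neg_apply,
      mul_neg, sum_neg_distrib, neg_sub]
    have hx : p i - q i = x i := max_zero_sub_max_neg_zero_eq_self (x i)
    change p i * d / s - c * q i / s + (p i - p i * (d / s) + (q i * (c / s) - q i)) = x i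
    linear_combination hx

/-- Schinzel's determinant inequality: for column vectors `x₁,…,x_N` of a real
`N×N` matrix `X`, `|det X| ≤ δ(x₁)⋯δ(x_N)`. -/
theorem stmt8 (N : ℕ) (X : Matrix (Fin N) (Fin N) ℝ) :
    |X.det| ≤ ∏ j, schinzelDelta (fun i => X i j) := by
  choose a v ha hv hweight hcol using
    fun j => exists_isEdgeVector_combination_weight_eq_schinzelDelta (fun i => X i j)
  have hXt : Xᵀ = of fun j => ∑ k, a j k • v j k := by
    ext j i
    exact (congrFun (hcol j) i).symm
  rw [← det_transpose, hXt, ← prod_congr rfl fun j _ => hweight j]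
  exact abs_det_le_prod_sum_of_isEdgeVector a v (fun j => ha j) (fun j => hv j)
end

section
/- For 1 ≤ L < N, μ_{L,N} ≤ 2^L, where μ_{L,N} is the maximum of ‖x_1 ∧ ⋯ ∧ x_L‖_1 over points x_ℓ in the Schinzel unit ball K_N. Moreover, if 2L ≤ N then μ_{L,N} = 2^L. -/
/-!
Expanding each `L × L` minor by the Leibniz formula bounds `‖x₁ ∧ ⋯ ∧ x_L‖₁` by the sum of
`∏ₗ |xₗ (f l)|` over the injective maps `f : Fin L → Fin N` (a pair of a row set and a
permutation determines `f`), hence by `∏ₗ ‖xₗ‖₁`; and `‖x‖₁ = Σ x⁺ + Σ x⁻ ≤ 2 δ(x)`.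
For `xₗ = e_{2l} − e_{2l+1}`, each of the `2^L` row sets choosing one of `2l, 2l+1` for every
`l` carries a diagonal minor with entries `±1`, so the bound is attained.
-/

open Finset Matrix Function

lemma sum_comp_le_sum_of_injective {α β R : Type*} [Fintype α] [Fintype β]
    [AddCommMonoid R] [PartialOrder R] [IsOrderedAddMonoid R] {g : α → β} (hg : Injective g)
    {f : β → R} (hf : ∀ b, 0 ≤ f b) : ∑ a, f (g a) ≤ ∑ b, f b := by
  classical
  rw [← sum_image fun a _ b _ h => hg h]
  exact sum_le_univ_sum_of_nonneg hf

lemma abs_det_le_sum_prod_abs {n R : Type*} [Fintype n] [DecidableEq n] [CommRing R]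
    [LinearOrder R] [IsStrictOrderedRing R] (M : Matrix n n R) :
    |M.det| ≤ ∑ σ : Equiv.Perm n, ∏ i, |M (σ i) i| := by
  rw [det_apply']
  refine (abs_sum_le_sum_abs _ _).trans (sum_le_sum fun σ _ => ?_)
  rw [abs_mul, abs_prod]
  rcases Int.units_eq_one_or (Equiv.Perm.sign σ) with h | h <;> simp [h]

lemma sum_abs_le_two_mul_schinzelDelta {N : ℕ} (x : Fin N → ℝ) :
    ∑ k, |x k| ≤ 2 * schinzelDelta x := by
  simp only [← max_zero_add_max_neg_zero_eq_abs_self, sum_add_distrib, schinzelDelta]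
  linarith [le_max_left (∑ m, max (x m) 0) (∑ n, max (-(x n)) 0),
    le_max_right (∑ m, max (x m) 0) (∑ n, max (-(x n)) 0)]

lemma schinzelDelta_single_sub_single {N : ℕ} {a b : Fin N} (hab : a ≠ b) :
    schinzelDelta (Pi.single a 1 - Pi.single b 1 : Fin N → ℝ) = 1 := by
  have hpos : ∀ m, max ((Pi.single a 1 - Pi.single b 1 : Fin N → ℝ) m) 0 =
      (Pi.single a 1 : Fin N → ℝ) m := by
    intro m
    by_cases ha : m = a <;> by_cases hb : m = b <;> simp_all
  have hneg : ∀ m, max (-(Pi.single a 1 - Pi.single b 1 : Fin N → ℝ) m) 0 =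
      (Pi.single b 1 : Fin N → ℝ) m := by
    intro m
    by_cases ha : m = a <;> by_cases hb : m = b <;> simp_all
  simp only [schinzelDelta, hpos, hneg, sum_pi_single', mem_univ, if_true, max_self]

section Wedge

variable {N L : ℕ}

def minor (x : Fin L → Fin N → ℝ) (e : Fin L → Fin N) : Matrix (Fin L) (Fin L) ℝ :=
  Matrix.of fun i j => x j (e i)

lemma wedgeL1_eq_sum_orderEmbedding (x : Fin L → Fin N → ℝ) :
    wedgeL1 x = ∑ e : Fin L ↪o Fin N, |(minor x e).det| := by
  rw [wedgeL1, ← Fintype.sum_subtype_add_sum_subtype (fun I : Finset (Fin N) => I.card = L)]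
  rw [sum_eq_zero (fun (I : {I : Finset (Fin N) // ¬ I.card = L}) _ => dif_neg I.2), add_zero]
  refine Fintype.sum_bijective (fun I : {I : Finset (Fin N) // I.card = L} => I.1.orderEmbOfFin I.2)
    Set.powersetCard.ofFinEmbEquiv.symm.bijective _ _ fun I => ?_
  rw [dif_pos I.2]
  rfl

lemma wedgeL1_le_prod_sum_abs (x : Fin L → Fin N → ℝ) :
    wedgeL1 x ≤ ∏ l, ∑ k, |x l k| := by
  classical
  set H : (Fin L → Fin N) → ℝ := fun f => ∏ i, |x i (f i)|
  have hinj : Injective fun p : (Fin L ↪o Fin N) × Equiv.Perm (Fin L) => ⇑p.1 ∘ ⇑p.2 := by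
    rintro ⟨e, σ⟩ ⟨e', σ'⟩ h
    have he : e = e' := OrderEmbedding.range_inj.mp (by
      simpa only [EquivLike.range_comp] using congrArg Set.range h)
    subst he
    exact Prod.ext rfl (Equiv.ext fun i => e.injective (congrFun h i))
  calc wedgeL1 x = ∑ e : Fin L ↪o Fin N, |(minor x e).det| := wedgeL1_eq_sum_orderEmbedding x
    _ ≤ ∑ e : Fin L ↪o Fin N, ∑ σ : Equiv.Perm (Fin L), H (e ∘ σ) :=
        sum_le_sum fun e _ => abs_det_le_sum_prod_abs _
    _ = ∑ p : (Fin L ↪o Fin N) × Equiv.Perm (Fin L), H (p.1 ∘ p.2) :=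
        (Fintype.sum_prod_type' _).symm
    _ ≤ ∑ f, H f := sum_comp_le_sum_of_injective hinj fun f => prod_nonneg fun i _ => abs_nonneg _
    _ = ∏ l, ∑ k, |x l k| := (Fintype.prod_sum fun l k => |x l k|).symm

lemma wedgeL1_le_two_pow {x : Fin L → Fin N → ℝ} (hx : ∀ l, schinzelDelta (x l) ≤ 1) :
    wedgeL1 x ≤ 2 ^ L :=
  calc wedgeL1 x ≤ ∏ l, ∑ k, |x l k| := wedgeL1_le_prod_sum_abs x
    _ ≤ ∏ _l : Fin L, (2 : ℝ) :=
        prod_le_prod (fun l _ => sum_nonneg fun k _ => abs_nonneg _) fun l _ =>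
          (sum_abs_le_two_mul_schinzelDelta (x l)).trans (by linarith [hx l])
    _ = 2 ^ L := by simp

end Wedge

section Extremal

variable {N L : ℕ} (hLN : 2 * L ≤ N)

def pairDiff (l : Fin L) : Fin N → ℝ :=
  Pi.single ⟨2 * l, by omega⟩ 1 - Pi.single ⟨2 * l + 1, by omega⟩ 1

def pairSelection (s : Finset (Fin L)) : Fin L ↪o Fin N :=
  OrderEmbedding.ofStrictMono (fun l => ⟨2 * l + if l ∈ s then 1 else 0, by split_ifs <;> omega⟩)
    fun i j hij => by
      simp only [Fin.mk_lt_mk]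
      have : (i : ℕ) < j := hij
      split_ifs <;> omega

@[simp]
lemma pairSelection_apply_val (s : Finset (Fin L)) (l : Fin L) :
    (pairSelection hLN s l : ℕ) = 2 * l + if l ∈ s then 1 else 0 :=
  rfl

lemma pairSelection_injective : Injective (pairSelection hLN) := by
  intro s t h
  ext l
  have := congrArg Fin.val (DFunLike.congr_fun h l)
  simp only [pairSelection_apply_val] at this
  split_ifs at this <;> simp_all

lemma minor_pairDiff_pairSelection (s : Finset (Fin L)) :
    minor (pairDiff hLN) (pairSelection hLN s) = diagonal fun i => if i ∈ s then -1 else 1 := by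
  ext i j
  simp only [minor, pairDiff, of_apply, Pi.sub_apply, Pi.single_apply, Fin.ext_iff,
    diagonal_apply, pairSelection_apply_val]
  split_ifs <;> first | omega | norm_num

lemma abs_det_minor_pairDiff_pairSelection (s : Finset (Fin L)) :
    |(minor (pairDiff hLN) (pairSelection hLN s)).det| = 1 := by
  rw [minor_pairDiff_pairSelection, det_diagonal, abs_prod]
  exact prod_eq_one fun i _ => by split_ifs <;> norm_num

lemma two_pow_le_wedgeL1_pairDiff : 2 ^ L ≤ wedgeL1 (pairDiff hLN) :=
  calc (2 : ℝ) ^ L = ∑ s : Finset (Fin L), |(minor (pairDiff hLN) (pairSelection hLN s)).det| := by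
        simp [abs_det_minor_pairDiff_pairSelection, Fintype.card_finset]
    _ ≤ ∑ e : Fin L ↪o Fin N, |(minor (pairDiff hLN) e).det| :=
        sum_comp_le_sum_of_injective (f := fun e => |(minor (pairDiff hLN) e).det|)
          (pairSelection_injective hLN) fun e => abs_nonneg _
    _ = wedgeL1 (pairDiff hLN) := (wedgeL1_eq_sum_orderEmbedding _).symm

end Extremal

theorem stmt11_general (N L : ℕ) :
    (∀ x : Fin L → Fin N → ℝ, (∀ l, schinzelDelta (x l) ≤ 1) → wedgeL1 x ≤ 2 ^ L) ∧
    (2 * L ≤ N → ∃ x : Fin L → Fin N → ℝ,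
      (∀ l, schinzelDelta (x l) ≤ 1) ∧ wedgeL1 x = 2 ^ L) := by
  refine ⟨fun x hx => wedgeL1_le_two_pow hx, fun h2L => ?_⟩
  have hball : ∀ l, schinzelDelta (pairDiff h2L l) ≤ 1 := fun l =>
    (schinzelDelta_single_sub_single (by simp [Fin.ext_iff])).le
  exact ⟨pairDiff h2L, hball,
    le_antisymm (wedgeL1_le_two_pow hball) (two_pow_le_wedgeL1_pairDiff h2L)⟩

/-- For `1 ≤ L < N` the maximum `μ_{L,N}` of `‖x₁ ∧ ⋯ ∧ x_L‖₁` over the Schinzel unit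
ball is at most `2^L`; if moreover `2L ≤ N` the value `2^L` is attained. -/
theorem stmt11 (N L : ℕ) (hL : 1 ≤ L) (hLN : L < N) :
    (∀ x : Fin L → Fin N → ℝ, (∀ l, schinzelDelta (x l) ≤ 1) → wedgeL1 x ≤ 2 ^ L) ∧
    (2 * L ≤ N → ∃ x : Fin L → Fin N → ℝ,
      (∀ l, schinzelDelta (x l) ≤ 1) ∧ wedgeL1 x = 2 ^ L) :=
  stmt11_general N L
end

section
/- Let Y = (y_1 ⋯ y_N) be an L×N matrix whose rows each have exactly two nonzero entries, one equal to 1 and one equal to −1 (so the transpose has columns in F_N), with no column y_n equal to 0. For ℓ = 1,...,L set S(ℓ) = {n : |y_{ℓn}| = 1}, and let P be the associated fixed-set algebra. Then for a nonempty A ⊆ {1,...,N}: A ∈ P if and only if Σ_{n ∈ A} y_n = 0. -/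
namespace Finset

section Saturation

variable {ι α : Type*} [Fintype ι] [DecidableEq α]

/-- The map `η` of the paper. -/
def saturation (S : ι → Finset α) (A : Finset α) : Finset α :=
  univ.biUnion fun l => if (S l ∩ A).Nonempty then S l else ∅

theorem saturation_subset_iff {S : ι → Finset α} {A : Finset α} :
    saturation S A ⊆ A ↔ ∀ l, (S l ∩ A).Nonempty → S l ⊆ A := by
  simp only [saturation, biUnion_subset, mem_univ, forall_const]
  refine forall_congr' fun l => ?_
  split_ifs with h <;> simp [h]

theorem subset_saturation {S : ι → Finset α} (hcover : ∀ a, ∃ l, a ∈ S l) (A : Finset α) :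
    A ⊆ saturation S A := by
  intro a ha
  obtain ⟨l, hl⟩ := hcover a
  exact mem_biUnion.2 ⟨l, mem_univ l, by rw [if_pos ⟨a, mem_inter.2 ⟨hl, ha⟩⟩]; exact hl⟩

theorem saturation_eq_self_iff {S : ι → Finset α} (hcover : ∀ a, ∃ l, a ∈ S l)
    {A : Finset α} : saturation S A = A ↔ ∀ l, (S l ∩ A).Nonempty → S l ⊆ A := by
  rw [← saturation_subset_iff]
  exact ⟨fun h => h.subset, fun h => h.antisymm (subset_saturation hcover A)⟩

end Saturation

theorem pair_inter_nonempty_imp_subset_iff {α : Type*} [DecidableEq α] {m n : α}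
    {A : Finset α} : (({m, n} ∩ A).Nonempty → {m, n} ⊆ A) ↔ (m ∈ A ↔ n ∈ A) := by
  simp only [Finset.Nonempty, mem_inter, mem_insert, mem_singleton,
    insert_subset_iff, singleton_subset_iff]
  constructor
  · intro h
    exact ⟨fun hm => (h ⟨m, Or.inl rfl, hm⟩).2, fun hn => (h ⟨n, Or.inr rfl, hn⟩).1⟩
  · rintro h ⟨k, rfl | rfl, hk⟩
    exacts [⟨hk, h.1 hk⟩, ⟨h.2 hk, hk⟩]

end Finset

section SingleSubSingle

open Finset

variable {α R : Type*} [DecidableEq α] [AddCommGroupWithOne R] [NeZero (1 : R)]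

theorem filter_single_sub_single_ne_zero [Fintype α] [DecidableEq R] {m n : α} (hmn : m ≠ n) :
    univ.filter (fun k => (Pi.single m 1 - Pi.single n 1 : α → R) k ≠ 0) = {m, n} := by
  ext k
  by_cases hkm : k = m <;> by_cases hkn : k = n <;> simp_all

theorem sum_single_sub_single_eq_zero_iff (m n : α) (A : Finset α) :
    ∑ k ∈ A, (Pi.single m 1 - Pi.single n 1 : α → R) k = 0 ↔ (m ∈ A ↔ n ∈ A) := by
  simp only [Pi.sub_apply, sum_sub_distrib, sum_pi_single']
  by_cases hm : m ∈ A <;> by_cases hn : n ∈ A <;> simp [hm, hn]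

end SingleSubSingle

/-- Let `Y` be an `L×N` integer matrix whose rows each have exactly one entry `1` and
one entry `−1` (all others zero) and with no zero column; `S(ℓ)` is the support of the
`ℓ`-th row, with `η`, `P` as before.  Then for nonempty `A ⊆ {1,…,N}`:
`A ∈ P` iff `Σ_{n ∈ A} yₙ = 0`, where `yₙ` are the columns of `Y`. -/
theorem stmt15 (N L : ℕ) (Y : Matrix (Fin L) (Fin N) ℤ)
    (hrow : ∀ l, ∃ m n : Fin N, m ≠ n ∧
      Y l = (Pi.single m 1 : Fin N → ℤ) - Pi.single n 1)
    (hcol : ∀ n, (fun l => Y l n) ≠ 0) :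
    let S : Fin L → Finset (Fin N) := fun l => Finset.univ.filter fun n => Y l n ≠ 0
    let η : Finset (Fin N) → Finset (Fin N) :=
      fun A => Finset.univ.biUnion fun l => if (S l ∩ A).Nonempty then S l else ∅
    ∀ A : Finset (Fin N), A.Nonempty →
      (η A = A ↔ ∑ n ∈ A, (fun l => Y l n) = 0) := by
  intro S η A _
  have hcover : ∀ n, ∃ l, n ∈ S l := fun n => by
    simpa [S, funext_iff] using hcol n
  change Finset.saturation S A = A ↔ _
  rw [Finset.saturation_eq_self_iff hcover, funext_iff]
  refine forall_congr' fun l => ?_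
  obtain ⟨m, n, hmn, hY⟩ := hrow l
  simp only [S, Finset.sum_apply, Pi.zero_apply, hY, filter_single_sub_single_ne_zero hmn,
    sum_single_sub_single_eq_zero_iff, Finset.pair_inter_nonempty_imp_subset_iff]
end

section
/- In the setting of the previous statement, a nonempty subset A ⊆ {1,...,N} is a minimal element of P if and only if the subgroup of Z^L generated by {y_n : n ∈ A} has rank |A| − 1 and every proper nonempty subcollection {y_n : n ∈ B}, B ⊊ A, is linearly independent. Moreover, if the minimal sets are A_1,...,A_r then N − L ≤ r, with equality when rank Y = L. -/
/-!
Read the rows of `Y` as the edges of a graph on `{1,…,N}`. The sets fixed by `η` are the unions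
of connected components, so the minimal ones are exactly the components. Since each row is
`e_m - e_n`, a combination `∑ cₙ yₙ` vanishes iff `c` is constant on every component. Hence the
columns indexed by `B` are independent iff `B` contains no whole component, while the columns of a
component `C` sum to zero and span a lattice of rank `|C| - 1`. Over `ℚ` the same description
identifies the kernel of `Y` with the functions on the set of components, so `rank Y + r = N`,
and `rank Y ≤ L` gives `N - L ≤ r`.
-/

open Finset Module Submodule

lemma LinearIndepOn.finrank_span_image_finset {R M ι : Type*} [Semiring R] [Nontrivial R]
    [StrongRankCondition R] [AddCommMonoid M] [Module R M] {v : ι → M} {s : Finset ι}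
    (h : LinearIndepOn R v (s : Set ι)) : finrank R (span R (v '' s)) = #s := by
  rw [Set.image_eq_range, finrank_span_eq_card h]
  simp

section Components

variable {ι V : Type*} (Y : Matrix ι V ℤ)

def componentSetoid : Setoid V :=
  Relation.EqvGen.setoid fun m n => ∃ l, Y l m ≠ 0 ∧ Y l n ≠ 0

open scoped Classical in
noncomputable def component [Fintype V] (v : V) : Finset V :=
  univ.filter fun w => componentSetoid Y v w

def IsRowClosed (A : Finset V) : Prop :=
  ∀ l m n, Y l m ≠ 0 → Y l n ≠ 0 → m ∈ A → n ∈ A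

variable {Y}

lemma IsRowClosed.componentSetoid_le {A : Finset V} (hA : IsRowClosed Y A) :
    componentSetoid Y ≤ Setoid.ker (· ∈ A) :=
  Setoid.eqvGen_le fun _ _ ⟨l, hm, hn⟩ => propext ⟨hA l _ _ hm hn, hA l _ _ hn hm⟩

variable [Fintype V]

lemma mem_component {v w : V} : w ∈ component Y v ↔ componentSetoid Y v w := by
  simp [component]

lemma self_mem_component (v : V) : v ∈ component Y v :=
  mem_component.2 ((componentSetoid Y).refl' v)

lemma component_eq_component_iff {v w : V} :
    component Y v = component Y w ↔ componentSetoid Y v w := by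
  refine ⟨fun h => mem_component.1 (h ▸ self_mem_component w), fun h => ?_⟩
  ext u
  simp only [mem_component]
  exact ⟨(componentSetoid Y).trans' ((componentSetoid Y).symm' h), (componentSetoid Y).trans' h⟩

lemma mem_component_comm {v w : V} : w ∈ component Y v ↔ v ∈ component Y w := by
  simp only [mem_component]
  exact (componentSetoid Y).comm'

lemma isRowClosed_component (v : V) : IsRowClosed Y (component Y v) :=
  fun l _ _ hm hn hmv => mem_component.2 <|
    (componentSetoid Y).trans' (mem_component.1 hmv) (Relation.EqvGen.rel _ _ ⟨l, hm, hn⟩)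

lemma IsRowClosed.component_subset {A : Finset V} (hA : IsRowClosed Y A) {v : V}
    (hv : v ∈ A) : component Y v ⊆ A :=
  fun _ hw => (Setoid.ker_def.1 (hA.componentSetoid_le (mem_component.1 hw))) ▸ hv

lemma card_range_component :
    Nat.card (Set.range (component Y)) = Nat.card (Quotient (componentSetoid Y)) := by
  let _ := componentSetoid Y
  have hf : ∀ v w, v ≈ w → component Y v = component Y w :=
    fun _ _ => component_eq_component_iff.2
  have hinj : Function.Injective (Quotient.lift (component Y) hf) := by
    rintro ⟨v⟩ ⟨w⟩ h
    exact Quotient.sound (component_eq_component_iff.1 h)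
  rw [← Set.range_quotient_lift hf, Nat.card_range_of_injective hinj]

lemma not_component_subset_of_ssubset {B : Finset V} {v : V} (hB : B ⊂ component Y v)
    (w : V) : ¬ component Y w ⊆ B := fun hw => by
  have hvw : component Y v = component Y w :=
    component_eq_component_iff.2 (mem_component.1 (hB.subset (hw (self_mem_component w))))
  exact hB.2 (hvw ▸ hw)

variable [Fintype ι] [DecidableEq V]

/-- The map `η` of the statement. -/
def rowHull (Y : Matrix ι V ℤ) (A : Finset V) : Finset V :=
  univ.biUnion fun l =>
    if ((univ.filter fun n => Y l n ≠ 0) ∩ A).Nonempty then univ.filter fun n => Y l n ≠ 0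
    else ∅

lemma mem_rowHull {A : Finset V} {n : V} :
    n ∈ rowHull Y A ↔ ∃ l, Y l n ≠ 0 ∧ ∃ m ∈ A, Y l m ≠ 0 := by
  simp only [rowHull, mem_biUnion, mem_univ, true_and]
  refine exists_congr fun l => ?_
  split_ifs with h
  · obtain ⟨m, hm⟩ := h
    simp only [mem_inter, mem_filter, mem_univ, true_and] at hm ⊢
    exact ⟨fun hn => ⟨hn, m, hm.2, hm.1⟩, And.left⟩
  · simp only [notMem_empty, false_iff, not_and, not_exists]
    exact fun _ m hmA hm => h ⟨m, by simp [hm, hmA]⟩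

lemma rowHull_eq_self_iff (hcol : ∀ n, (fun l => Y l n) ≠ 0) {A : Finset V} :
    rowHull Y A = A ↔ IsRowClosed Y A := by
  refine ⟨fun h l m n hm hn hmA => h ▸ mem_rowHull.2 ⟨l, hn, m, hmA, hm⟩, fun h => ?_⟩
  ext n
  refine ⟨fun hn => ?_, fun hn => ?_⟩
  · obtain ⟨l, hn, m, hmA, hm⟩ := mem_rowHull.1 hn
    exact h l m n hm hn hmA
  · obtain ⟨l, hl⟩ := Function.ne_iff.1 (hcol n)
    exact mem_rowHull.2 ⟨l, hl, n, hn, hl⟩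

lemma minimal_rowHull_iff (hcol : ∀ n, (fun l => Y l n) ≠ 0) (A : Finset V) :
    (A.Nonempty ∧ rowHull Y A = A ∧ ∀ B ⊆ A, B.Nonempty → B ≠ A → rowHull Y B ≠ B) ↔
      A ∈ Set.range (component Y) := by
  simp only [rowHull_eq_self_iff hcol, ne_eq]
  constructor
  · rintro ⟨⟨v, hv⟩, hA, hmin⟩
    by_contra hne
    exact hmin _ (hA.component_subset hv) ⟨v, self_mem_component v⟩
      (fun h => hne ⟨v, h⟩) (isRowClosed_component v)
  · rintro ⟨v, rfl⟩
    refine ⟨⟨v, self_mem_component v⟩, isRowClosed_component v, ?_⟩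
    rintro B hB ⟨w, hw⟩ hne hBc
    refine hne (subset_antisymm hB ?_)
    rw [component_eq_component_iff.2 (mem_component.1 (hB hw))]
    exact hBc.component_subset hw

end Components

section Incidence

variable {ι V : Type*} [DecidableEq V]

def IsOrientedIncidence (Y : Matrix ι V ℤ) : Prop :=
  ∀ l, ∃ m n, m ≠ n ∧ Y l = (Pi.single m 1 : V → ℤ) - Pi.single n 1

lemma single_sub_single_ne_zero_iff {a b n : V} (hab : a ≠ b) :
    (Pi.single a 1 - Pi.single b 1 : V → ℤ) n ≠ 0 ↔ n = a ∨ n = b := by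
  rcases eq_or_ne n a with rfl | hna
  · simp [hab]
  · rcases eq_or_ne n b with rfl | hnb <;> simp [*]

variable [Fintype V] {Y : Matrix ι V ℤ}

lemma sum_single_sub_single_zsmul {M : Type*} [AddCommGroup M] (a b : V) (c : V → M) :
    ∑ n, (Pi.single a 1 - Pi.single b 1 : V → ℤ) n • c n = c a - c b := by
  simp [sub_smul, sum_sub_distrib, Pi.single_apply]

theorem IsOrientedIncidence.sum_zsmul_eq_zero_iff (hY : IsOrientedIncidence Y) {M : Type*}
    [AddCommGroup M] (c : V → M) :
    (∀ l, ∑ n, Y l n • c n = 0) ↔ componentSetoid Y ≤ Setoid.ker c := by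
  have hsum_row : ∀ l a b, Y l = Pi.single a 1 - Pi.single b 1 →
      (∑ n, Y l n • c n = 0 ↔ c a = c b) := by
    intro l a b hl
    rw [hl, sum_single_sub_single_zsmul, sub_eq_zero]
  constructor
  · refine fun h => Setoid.eqvGen_le fun m n ⟨l, hm, hn⟩ => ?_
    obtain ⟨a, b, hab, hl⟩ := hY l
    have hcab := (hsum_row l a b hl).1 (h l)
    rw [hl, single_sub_single_ne_zero_iff hab] at hm hn
    rw [Setoid.ker_def]
    rcases hm with rfl | rfl <;> rcases hn with rfl | rfl <;> simp [hcab]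
  · intro h l
    obtain ⟨a, b, hab, hl⟩ := hY l
    refine (hsum_row l a b hl).2 (h (Relation.EqvGen.rel _ _ ⟨l, ?_, ?_⟩)) <;>
      rw [hl, single_sub_single_ne_zero_iff hab] <;> simp

theorem IsOrientedIncidence.sum_smul_cols_eq_zero_iff (hY : IsOrientedIncidence Y)
    (c : V → ℤ) :
    ∑ n, c n • (fun l => Y l n) = 0 ↔ componentSetoid Y ≤ Setoid.ker c := by
  rw [← hY.sum_zsmul_eq_zero_iff, funext_iff]
  simp only [Finset.sum_apply, Pi.smul_apply, smul_eq_mul, Pi.zero_apply, mul_comm]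

theorem IsOrientedIncidence.sum_cols_component (hY : IsOrientedIncidence Y) (v : V) :
    ∑ n ∈ component Y v, (fun l => Y l n) = 0 := by
  classical
  have h := (hY.sum_smul_cols_eq_zero_iff fun n => if n ∈ component Y v then 1 else 0).2
    fun m n hmn => by
      simp only [Setoid.ker_def, mem_component_comm (v := v), component_eq_component_iff.2 hmn]
  simpa [ite_smul, sum_ite_mem] using h

theorem IsOrientedIncidence.linearIndepOn_cols_iff (hY : IsOrientedIncidence Y)
    (B : Finset V) :
    LinearIndepOn ℤ (fun n l => Y l n) (B : Set V) ↔ ∀ v, ¬ component Y v ⊆ B := by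
  classical
  rw [linearIndepOn_finset_iff]
  constructor
  · intro h v hvB
    have hsum : ∑ n ∈ B, (if n ∈ component Y v then 1 else 0) • (fun l => Y l n) = 0 := by
      simpa [ite_smul, sum_ite_mem, inter_eq_right.2 hvB] using
        hY.sum_cols_component v
    simpa [self_mem_component] using h _ hsum v (hvB (self_mem_component v))
  · intro h f hf i hi
    by_contra hfi
    set g : V → ℤ := fun n => if n ∈ B then f n else 0
    have hg : componentSetoid Y ≤ Setoid.ker g :=
      (hY.sum_smul_cols_eq_zero_iff g).1 (by simpa [g, ite_smul, sum_ite_mem] using hf)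
    refine h i fun w hw => ?_
    by_contra hwB
    have := Setoid.ker_def.1 (hg (mem_component.1 hw))
    simp [g, hi, hwB, hfi] at this

theorem IsOrientedIncidence.finrank_span_cols_component (hY : IsOrientedIncidence Y)
    (v : V) :
    finrank ℤ (span ℤ ((fun n l => Y l n) '' (component Y v : Set V))) =
      #(component Y v) - 1 := by
  have hv := self_mem_component (Y := Y) v
  have hspan : span ℤ ((fun n l => Y l n) '' (component Y v : Set V)) =
      span ℤ ((fun n l => Y l n) '' ((component Y v).erase v : Set V)) := by
    conv_lhs => rw [← insert_erase hv, coe_insert, Set.image_insert_eq]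
    refine span_insert_eq_span ?_
    have hv_col : (fun l => Y l v) = -∑ n ∈ (component Y v).erase v, fun l => Y l n :=
      eq_neg_of_add_eq_zero_left <| by
        rw [add_sum_erase _ (fun n l => Y l n) hv, hY.sum_cols_component v]
    rw [hv_col]
    exact neg_mem (sum_mem fun n hn => subset_span (Set.mem_image_of_mem _ hn))
  have hindep := (hY.linearIndepOn_cols_iff _).2
    (not_component_subset_of_ssubset (erase_ssubset hv))
  rw [hspan, hindep.finrank_span_image_finset, card_erase_of_mem hv]

theorem IsOrientedIncidence.mem_range_component_iff (hY : IsOrientedIncidence Y)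
    {A : Finset V} (hA : A.Nonempty) :
    A ∈ Set.range (component Y) ↔
      finrank ℤ (span ℤ ((fun n l => Y l n) '' (A : Set V))) = #A - 1 ∧
        ∀ B ⊂ A, B.Nonempty → LinearIndependent ℤ (fun n : B => fun l => Y l (n : V)) := by
  constructor
  · rintro ⟨v, rfl⟩
    exact ⟨hY.finrank_span_cols_component v, fun B hB _ =>
      (hY.linearIndepOn_cols_iff B).2 (not_component_subset_of_ssubset hB)⟩
  · rintro ⟨hrank, hsub⟩
    have hdep : ¬ LinearIndepOn ℤ (fun n l => Y l n) (A : Set V) := fun h => by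
      have := h.finrank_span_image_finset
      have := hA.card_pos
      omega
    obtain ⟨v, hvA⟩ : ∃ v, component Y v ⊆ A := by
      simpa [hY.linearIndepOn_cols_iff] using hdep
    refine ⟨v, (eq_or_ssubset_of_subset hvA).resolve_right fun hlt => ?_⟩
    exact (hY.linearIndepOn_cols_iff _).1 (hsub _ hlt ⟨v, self_mem_component v⟩) v subset_rfl

theorem IsOrientedIncidence.rank_map_intCast_add_card_quotient (hY : IsOrientedIncidence Y)
    (K : Type*) [Field K] :
    (Y.map (Int.cast : ℤ → K)).rank + Nat.card (Quotient (componentSetoid Y)) =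
      Fintype.card V := by
  classical
  let q := LinearMap.funLeft K K (Quotient.mk (componentSetoid Y))
  have hq : Function.Injective q :=
    LinearMap.funLeft_injective_of_surjective _ _ _ Quotient.mk_surjective
  have hker : LinearMap.ker (Y.map (Int.cast : ℤ → K)).mulVecLin = LinearMap.range q := by
    ext c
    have hmul : (Y.map (Int.cast : ℤ → K)).mulVec c = 0 ↔ ∀ l, ∑ n, Y l n • c n = 0 := by
      simp [funext_iff, Matrix.mulVec, dotProduct, zsmul_eq_mul]
    rw [LinearMap.mem_ker, Matrix.mulVecLin_apply, LinearMap.mem_range, hmul,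
      hY.sum_zsmul_eq_zero_iff]
    exact ⟨fun h => ⟨Quotient.lift c h, rfl⟩,
      fun ⟨f, hf⟩ m n hmn => hf ▸ congrArg f (Quotient.sound hmn)⟩
  have := LinearMap.finrank_range_add_finrank_ker (Y.map (Int.cast : ℤ → K)).mulVecLin
  rwa [hker, LinearMap.finrank_range_of_inj hq, finrank_fintype_fun_eq_card,
    finrank_fintype_fun_eq_card, ← Nat.card_eq_fintype_card] at this

end Incidence

/-- In the setting of the previous statement, a nonempty `A` is minimal in `P` iff the
subgroup of `ℤ^L` generated by the columns `{yₙ : n ∈ A}` has rank `|A| − 1` and every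
proper nonempty subcollection is linearly independent.  Moreover the number `r` of
minimal sets satisfies `N − L ≤ r`, with equality when `rank Y = L`. -/
theorem stmt16 (N L : ℕ) (Y : Matrix (Fin L) (Fin N) ℤ)
    (hrow : ∀ l, ∃ m n : Fin N, m ≠ n ∧
      Y l = (Pi.single m 1 : Fin N → ℤ) - Pi.single n 1)
    (hcol : ∀ n, (fun l => Y l n) ≠ 0) :
    let S : Fin L → Finset (Fin N) := fun l => Finset.univ.filter fun n => Y l n ≠ 0
    let η : Finset (Fin N) → Finset (Fin N) :=
      fun A => Finset.univ.biUnion fun l => if (S l ∩ A).Nonempty then S l else ∅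
    let Minimal : Finset (Fin N) → Prop := fun A =>
      A.Nonempty ∧ η A = A ∧ ∀ B ⊆ A, B.Nonempty → B ≠ A → η B ≠ B
    (∀ A : Finset (Fin N), A.Nonempty →
      (Minimal A ↔
        (Module.finrank ℤ
            ↥(Submodule.span ℤ ((fun n => fun l => Y l n) '' (A : Set (Fin N))))
          = A.card - 1 ∧
        ∀ B ⊂ A, B.Nonempty →
          LinearIndependent ℤ (fun n : ↥B => fun l => Y l (n : Fin N))))) ∧
    N - L ≤ Nat.card {A : Finset (Fin N) // Minimal A} ∧
    ((Y.map (Int.cast : ℤ → ℚ)).rank = L →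
      N - L = Nat.card {A : Finset (Fin N) // Minimal A}) := by
  intro S η Minimal
  have hY : IsOrientedIncidence Y := hrow
  have hMin : ∀ A, Minimal A ↔ A ∈ Set.range (component Y) := minimal_rowHull_iff hcol
  have hcard : Nat.card {A // Minimal A} = Nat.card (Quotient (componentSetoid Y)) := by
    rw [← card_range_component]
    exact Nat.card_congr (Equiv.subtypeEquivRight hMin)
  have hrank := hY.rank_map_intCast_add_card_quotient ℚ
  have hle := Matrix.rank_le_card_height (Y.map (Int.cast : ℤ → ℚ))
  rw [Fintype.card_fin] at hrank hle
  exact ⟨fun A hA => (hMin A).trans (hY.mem_range_component_iff hA),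
    by omega, fun _ => by omega⟩
end

section
/- Let L < N ≤ 2L and let ξ_1, ..., ξ_L be vectors in E_N ∪ F_N. Then ‖ξ_1 ∧ ξ_2 ∧ ⋯ ∧ ξ_L‖_1 ≤ (N/(N−L))^{N−L}. Consequently, for arbitrary vectors x_1,...,x_L in R^N with L < N ≤ 2L, ‖x_1 ∧ ⋯ ∧ x_L‖_1 ≤ (N/(N−L))^{N−L} δ(x_1)⋯δ(x_L). -/
/-!
A matrix whose columns lie in `E_N ∪ F_N` is the incidence matrix of a directed graph some of whose
edges have a single endpoint, hence totally unimodular: every minor is `0` or `±1`. Call `m` a root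
if `±e_m` is a column, and let the columns `e_m - e_n` be the edges. The left kernel contains the
indicator of every component without a root and is determined by its values on these free
components, so there are at least `N - L` of them. A nonzero minor on the rows `I` forces each free
component to meet the `N - L` rows outside `I`; so there are exactly `N - L` free components and
`Iᶜ` picks one vertex from each. The number of nonzero minors is therefore at most the product of
the sizes of the free components, which is at most `(N/(N-L))^(N-L)` by AM-GM.

For arbitrary columns, normalise each to `δ = 1`. The unit ball of `δ` is the convex hull of
`E_N ∪ F_N` (the dual norm of `δ` is attained on these points), and `‖x₁ ∧ ⋯ ∧ x_L‖₁` is a seminorm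
in each column, so on a product of these hulls it is maximal at a tuple of vertices.
-/

open Finset

section IncidenceVector

variable {m n R : Type*} [DecidableEq m] [DecidableEq n]

/-- The columns of an incidence matrix of a directed graph whose edges may also have a single
endpoint. -/
def IsIncidenceVector [Zero R] [One R] [Sub R] (v : m → R) : Prop :=
  ∃ s t : Finset m, #s ≤ 1 ∧ #t ≤ 1 ∧
    v = fun i => (if i ∈ s then 1 else 0) - (if i ∈ t then 1 else 0)

variable [CommRing R]

lemma IsIncidenceVector.comp {v : m → R} (hv : IsIncidenceVector v) {g : n → m}
    (hg : g.Injective) : IsIncidenceVector (v ∘ g) := by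
  obtain ⟨s, t, hs, ht, rfl⟩ := hv
  refine ⟨s.preimage g hg.injOn, t.preimage g hg.injOn, ?_, ?_, by ext; simp⟩
  · exact (card_le_card_of_injOn g (fun a ha => by simpa using ha) hg.injOn).trans hs
  · exact (card_le_card_of_injOn g (fun a ha => by simpa using ha) hg.injOn).trans ht

lemma IsIncidenceVector.sum_eq_zero_or_exists_single [Fintype m] {v : m → R}
    (hv : IsIncidenceVector v) :
    ∑ i, v i = 0 ∨ ∃ i, (v i = 1 ∨ v i = -1) ∧ ∀ i' ≠ i, v i' = 0 := by
  obtain ⟨s, t, hs, ht, rfl⟩ := hv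
  by_cases hst : #s = #t
  · left
    simp [sum_sub_distrib, hst]
  right
  obtain ⟨hs0, ht1⟩ | ⟨hs1, ht0⟩ : (#s = 0 ∧ #t = 1) ∨ (#s = 1 ∧ #t = 0) := by omega
  · obtain ⟨a, rfl⟩ := card_eq_one.mp ht1
    rw [card_eq_zero] at hs0
    subst hs0
    exact ⟨a, by simp, fun i hi => by simp [hi]⟩
  · obtain ⟨a, rfl⟩ := card_eq_one.mp hs1
    rw [card_eq_zero] at ht0
    subst ht0
    exact ⟨a, by simp, fun i hi => by simp [hi]⟩

end IncidenceVector

namespace Matrix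

variable {R : Type*} [CommRing R] [IsDomain R]

theorem det_mem_range_signType_cast_of_isIncidenceVector :
    ∀ {n : ℕ} (A : Matrix (Fin n) (Fin n) R), (∀ j, IsIncidenceVector fun i => A i j) →
      A.det ∈ Set.range SignType.cast
  | 0, A, _ => ⟨1, by simp⟩
  | n + 1, A, hA => by
    by_cases hsingle : ∃ j i, (A i j = 1 ∨ A i j = -1) ∧ ∀ i' ≠ i, A i' j = 0
    · obtain ⟨j, i, hij, hcol⟩ := hsingle
      obtain ⟨s, hs⟩ := det_mem_range_signType_cast_of_isIncidenceVector
        (A.submatrix i.succAbove j.succAbove)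
        fun k => (hA (j.succAbove k)).comp Fin.succAbove_right_injective
      rw [det_succ_column A j, sum_eq_single i (fun i' _ hi' => by simp [hcol i' hi']) (by simp),
        ← hs]
      rcases hij with h | h
      · exact ⟨(-1) ^ (i + j : ℕ) * s, by simp [h]⟩
      · exact ⟨-((-1) ^ (i + j : ℕ) * s), by simp [h]⟩
    · have hsum : ∀ j, ∑ i, A i j = 0 := fun j =>
        (hA j).sum_eq_zero_or_exists_single.resolve_right fun ⟨i, hi⟩ => hsingle ⟨j, i, hi⟩
      have hdet : A.det = 0 := exists_vecMul_eq_zero_iff.mp ⟨fun _ => 1,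
        fun h => one_ne_zero (congrFun h 0), by ext j; simp [vecMul, dotProduct, hsum j]⟩
      exact ⟨0, by simp [hdet]⟩

theorem isTotallyUnimodular_of_isIncidenceVector {m n : Type*} [DecidableEq m]
    (A : Matrix m n R) (hA : ∀ j, IsIncidenceVector fun i => A i j) : A.IsTotallyUnimodular :=
  fun _ _ g hf _ => det_mem_range_signType_cast_of_isIncidenceVector (A.submatrix _ g)
    fun j => (hA (g j)).comp hf

end Matrix

lemma isIncidenceVector_of_mem_schE_union_schF {N : ℕ} {x : Fin N → ℝ}
    (hx : x ∈ schE N ∪ schF N) : IsIncidenceVector x := by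
  rcases hx with ⟨m, rfl | rfl⟩ | ⟨m, n, -, rfl⟩
  · exact ⟨{m}, ∅, by simp, by simp, by ext; simp [Pi.single_apply]⟩
  · exact ⟨∅, {m}, by simp, by simp, by ext; simp [Pi.single_apply]⟩
  · exact ⟨{m}, {n}, by simp, by simp, by ext; simp [Pi.single_apply]⟩

section Minor

variable {R : Type*} [CommRing R] {N L : ℕ}

/-- The minor on the rows `I` of the matrix with columns `x l`; it is `0` unless `#I = L`. -/
noncomputable def minorDet (x : Fin L → Fin N → R) (I : Finset (Fin N)) : R :=
  if h : #I = L then (Matrix.of fun i j => x j (I.orderIsoOfFin h i)).det else 0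

lemma wedgeL1_eq_sum_abs_minorDet (x : Fin L → Fin N → ℝ) :
    wedgeL1 x = ∑ I, |minorDet x I| := by
  unfold wedgeL1 minorDet
  congr! 1 with I
  split_ifs <;> simp

lemma card_eq_of_minorDet_ne_zero {x : Fin L → Fin N → R} {I : Finset (Fin N)}
    (h : minorDet x I ≠ 0) : #I = L := by
  by_contra hI
  exact h (dif_neg hI)

lemma abs_minorDet_le_one {x : Fin L → Fin N → ℝ} (hx : ∀ l, x l ∈ schE N ∪ schF N)
    (I : Finset (Fin N)) : |minorDet x I| ≤ 1 := by
  unfold minorDet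
  split_ifs with h
  · have hTU := Matrix.isTotallyUnimodular_of_isIncidenceVector (Matrix.of fun m l => x l m)
      fun l => isIncidenceVector_of_mem_schE_union_schF (hx l)
    obtain ⟨s, hs⟩ :
        (Matrix.of fun i j => x j (I.orderIsoOfFin h i)).det ∈ Set.range SignType.cast :=
      hTU L _ id (Subtype.val_injective.comp (I.orderIsoOfFin h).injective) Function.injective_id
    rw [← hs]
    cases s <;> simp
  · simp

lemma wedgeL1_le_card_minorDet_ne_zero {x : Fin L → Fin N → ℝ}
    (hx : ∀ l, x l ∈ schE N ∪ schF N) :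
    wedgeL1 x ≤ #{I | minorDet x I ≠ 0} := by
  rw [wedgeL1_eq_sum_abs_minorDet, card_filter, Nat.cast_sum]
  refine sum_le_sum fun I _ => ?_
  split_ifs with h
  · exact_mod_cast abs_minorDet_le_one hx I
  · simp_all

lemma exists_notMem_apply_ne_zero_of_minorDet_ne_zero [IsDomain R] {x : Fin L → Fin N → R}
    {I : Finset (Fin N)} (hI : minorDet x I ≠ 0) {w : Fin N → R} (hw : ∀ l, w ⬝ᵥ x l = 0)
    (hw0 : w ≠ 0) : ∃ m ∉ I, w m ≠ 0 := by
  have hcard := card_eq_of_minorDet_ne_zero hI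
  set σ := I.orderIsoOfFin hcard
  by_contra! hsupp
  have hdet : (Matrix.of fun i j => x j (σ i)).det ≠ 0 := by rwa [minorDet, dif_pos hcard] at hI
  have hker : Matrix.vecMul (fun i => w (σ i)) (Matrix.of fun i j => x j (σ i)) = 0 := by
    ext l
    calc ∑ i, w (σ i) * x l (σ i) = ∑ m : I, w m * x l m :=
          Equiv.sum_comp σ.toEquiv fun m : I => w m * x l m
      _ = w ⬝ᵥ x l := by
          rw [sum_coe_sort I fun m => w m * x l m]
          exact sum_subset (subset_univ I) fun m _ hm => by simp [hsupp m hm]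
      _ = 0 := hw l
  have hv : (fun i => w (σ i)) = 0 := by
    by_contra hv
    exact hdet (Matrix.exists_vecMul_eq_zero_iff.mp ⟨_, hv, hker⟩)
  refine hw0 (funext fun m => ?_)
  by_cases hm : m ∈ I
  · simpa using congrFun hv (σ.symm ⟨m, hm⟩)
  · exact hsupp m hm

end Minor

section Counting

variable {α β : Type*} [DecidableEq β]

lemma card_le_card_of_forall_exists_mem (c : α → β) {F : Finset β} {J : Finset α}
    (h : ∀ T ∈ F, ∃ a ∈ J, c a = T) : #F ≤ #J :=
  (card_le_card fun T hT => mem_image.mpr (h T hT)).trans card_image_le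

/-- Each `J ∈ 𝒮` is the image of a choice function for the fibers of `c` over `F`. -/
lemma card_le_prod_card_fiber [Fintype α] [DecidableEq α] (c : α → β) (F : Finset β)
    (𝒮 : Finset (Finset α)) (hmeet : ∀ J ∈ 𝒮, ∀ T ∈ F, ∃ a ∈ J, c a = T)
    (hcard : ∀ J ∈ 𝒮, #J ≤ #F) : #𝒮 ≤ ∏ T ∈ F, #{a | c a = T} := by
  let sections := F.pi fun T => ({a | c a = T} : Finset α)
  have hsub : 𝒮 ⊆ sections.image fun f => F.attach.image fun T => f T.1 T.2 := by
    intro J hJ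
    choose f hfJ hfc using hmeet J hJ
    refine mem_image.mpr ⟨f, mem_pi.mpr fun T hT => by simp [hfc], ?_⟩
    have hfJ' : F.attach.image (fun T => f T.1 T.2) ⊆ J := by
      simpa [image_subset_iff] using fun T hT => hfJ T hT
    refine eq_of_subset_of_card_le hfJ' ?_
    rw [card_image_of_injective _ fun T T' h => Subtype.ext (by simpa [hfc] using congrArg c h),
      card_attach]
    exact hcard J hJ
  calc #𝒮 ≤ #(sections.image _) := card_le_card hsub
    _ ≤ #sections := card_image_le
    _ = _ := card_pi _ _

end Counting

lemma prod_le_div_card_pow {ι : Type*} (s : Finset ι) {a : ι → ℝ} (ha : ∀ i ∈ s, 0 ≤ a i) {n : ℝ}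
    (hn : ∑ i ∈ s, a i ≤ n) : ∏ i ∈ s, a i ≤ (n / #s) ^ #s := by
  rcases s.eq_empty_or_nonempty with rfl | hs
  · simp
  have hk : (#s : ℝ) ≠ 0 := by simp [hs.ne_empty]
  have hgm := Real.geom_mean_le_arith_mean_weighted s (fun _ => (#s : ℝ)⁻¹) a
    (fun _ _ => by positivity) (by simp [hk]) ha
  calc ∏ i ∈ s, a i = (∏ i ∈ s, a i ^ (#s : ℝ)⁻¹) ^ #s := by
        rw [← prod_pow]
        exact prod_congr rfl fun i hi =>
          (Real.rpow_inv_natCast_pow (ha i hi) (card_ne_zero.mpr hs)).symm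
    _ ≤ (n / #s) ^ #s := by
        refine pow_le_pow_left₀ (prod_nonneg fun i hi => Real.rpow_nonneg (ha i hi) _)
          (hgm.trans ?_) _
        rw [← mul_sum, div_eq_inv_mul]
        gcongr

section Components

variable {N L : ℕ} (ξ : Fin L → Fin N → ℝ)

/-- The edges of the graph whose connected components are the classes of `Quot (Linked ξ)`. -/
def Linked (m n : Fin N) : Prop := ∃ l, ξ l = Pi.single m 1 - Pi.single n 1

def IsRoot (m : Fin N) : Prop := ∃ l, ξ l = Pi.single m 1 ∨ ξ l = -Pi.single m 1

noncomputable def freeComponents : Finset (Quot (Linked ξ)) :=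
  (Set.toFinite {T | ∀ m, Quot.mk _ m = T → ¬ IsRoot ξ m}).toFinset

variable {ξ}

lemma mem_freeComponents {T : Quot (Linked ξ)} :
    T ∈ freeComponents ξ ↔ ∀ m, Quot.mk _ m = T → ¬ IsRoot ξ m :=
  Set.Finite.mem_toFinset _

lemma apply_eq_of_mk_eq {w : Fin N → ℝ} (hw : ∀ l, ξ l ⬝ᵥ w = 0) {m n : Fin N}
    (h : Quot.mk (Linked ξ) m = Quot.mk _ n) : w m = w n :=
  congrArg (Quot.lift w fun a b ⟨l, hl⟩ => by simpa [hl, sub_eq_zero] using hw l) h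

lemma apply_eq_zero_of_isRoot {w : Fin N → ℝ} (hw : ∀ l, ξ l ⬝ᵥ w = 0) {m : Fin N}
    (h : IsRoot ξ m) : w m = 0 := by
  obtain ⟨l, hl | hl⟩ := h <;> simpa [hl] using hw l

open scoped Classical in
lemma indicator_dotProduct_eq_zero (hξ : ∀ l, ξ l ∈ schE N ∪ schF N)
    {T : Quot (Linked ξ)} (hT : T ∈ freeComponents ξ) (l : Fin L) :
    (fun m => if Quot.mk _ m = T then 1 else 0) ⬝ᵥ ξ l = 0 := by
  rw [mem_freeComponents] at hT
  rcases hξ l with ⟨p, hp | hp⟩ | ⟨p, q, -, hpq⟩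
  · simpa [hp] using fun h => hT p h ⟨l, Or.inl hp⟩
  · simpa [hp] using fun h => hT p h ⟨l, Or.inr hp⟩
  · simp [hpq, Quot.sound (r := Linked ξ) ⟨l, hpq⟩]

lemma exists_notMem_mk_eq_of_minorDet_ne_zero (hξ : ∀ l, ξ l ∈ schE N ∪ schF N)
    {I : Finset (Fin N)} (hI : minorDet ξ I ≠ 0) {T : Quot (Linked ξ)}
    (hT : T ∈ freeComponents ξ) : ∃ m ∉ I, Quot.mk _ m = T := by
  classical
  have hne : (fun m => if Quot.mk (Linked ξ) m = T then (1 : ℝ) else 0) ≠ 0 := fun h => by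
    obtain ⟨m, rfl⟩ := Quot.exists_rep T
    simpa using congrFun h m
  obtain ⟨m, hmI, hm⟩ := exists_notMem_apply_ne_zero_of_minorDet_ne_zero hI
    (indicator_dotProduct_eq_zero hξ hT) hne
  exact ⟨m, hmI, by simpa using hm⟩

lemma card_sub_le_card_freeComponents : N - L ≤ #(freeComponents ξ) := by
  have hrank := (Matrix.of ξ).mulVecLin.finrank_range_add_finrank_ker
  have hheight := (Matrix.of ξ).rank_le_height
  set K := LinearMap.ker (Matrix.of ξ).mulVecLin
  have hK : ∀ w : K, ∀ l, ξ l ⬝ᵥ (w : Fin N → ℝ) = 0 := fun w l =>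
    congrFun (LinearMap.mem_ker.mp w.2) l
  let ev : K →ₗ[ℝ] (freeComponents ξ → ℝ) :=
    LinearMap.pi fun T => LinearMap.proj (Quot.out T.1) ∘ₗ K.subtype
  have hev : Function.Injective ev := by
    refine (injective_iff_map_eq_zero ev).mpr fun w hw => Subtype.ext (funext fun m => ?_)
    by_cases hm : Quot.mk _ m ∈ freeComponents ξ
    · rw [apply_eq_of_mk_eq (hK w) (Quot.out_eq (Quot.mk _ m)).symm]
      exact congrFun hw ⟨_, hm⟩
    · obtain ⟨n, hmn, hn⟩ : ∃ n, Quot.mk _ n = Quot.mk (Linked ξ) m ∧ IsRoot ξ n := by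
        simpa [mem_freeComponents] using hm
      rw [apply_eq_of_mk_eq (hK w) hmn.symm]
      exact apply_eq_zero_of_isRoot (hK w) hn
  have hfree := LinearMap.finrank_le_finrank_of_injective hev
  simp only [Module.finrank_fintype_fun_eq_card, Fintype.card_coe, Fintype.card_fin] at hrank hfree
  unfold Matrix.rank at hheight
  omega

lemma card_compl_eq_of_minorDet_ne_zero {I : Finset (Fin N)} (hI : minorDet ξ I ≠ 0) :
    #Iᶜ = N - L := by
  rw [card_compl, card_eq_of_minorDet_ne_zero hI, Fintype.card_fin]

lemma card_freeComponents_eq (hξ : ∀ l, ξ l ∈ schE N ∪ schF N) {I : Finset (Fin N)}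
    (hI : minorDet ξ I ≠ 0) : #(freeComponents ξ) = N - L := by
  classical
  refine le_antisymm ?_ card_sub_le_card_freeComponents
  rw [← card_compl_eq_of_minorDet_ne_zero hI]
  exact card_le_card_of_forall_exists_mem _ fun T hT => by
    simpa using exists_notMem_mk_eq_of_minorDet_ne_zero hξ hI hT

open scoped Classical in
lemma card_minorDet_ne_zero_le_prod (hξ : ∀ l, ξ l ∈ schE N ∪ schF N) :
    #{I | minorDet ξ I ≠ 0} ≤ ∏ T ∈ freeComponents ξ, #{m | Quot.mk (Linked ξ) m = T} := by
  rw [← card_image_of_injective _ compl_injective]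
  refine card_le_prod_card_fiber _ _ _ ?_ ?_ <;> simp only [mem_image, mem_filter, mem_univ,
    true_and, forall_exists_index, and_imp, forall_apply_eq_imp_iff₂]
  · exact fun I hI T hT => by simpa using exists_notMem_mk_eq_of_minorDet_ne_zero hξ hI hT
  · exact fun I hI =>
      ((card_compl_eq_of_minorDet_ne_zero hI).trans (card_freeComponents_eq hξ hI).symm).le

end Components

theorem wedgeL1_le_of_forall_mem {N L : ℕ} (hLN : L < N) {ξ : Fin L → Fin N → ℝ}
    (hξ : ∀ l, ξ l ∈ schE N ∪ schF N) :
    wedgeL1 ξ ≤ ((N : ℝ) / ((N : ℝ) - (L : ℝ))) ^ (N - L) := by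
  classical
  have hbound := wedgeL1_le_card_minorDet_ne_zero hξ
  rcases ({I | minorDet ξ I ≠ 0} : Finset (Finset (Fin N))).eq_empty_or_nonempty with hV | ⟨I, hI⟩
  · rw [hV, card_empty, Nat.cast_zero] at hbound
    exact hbound.trans <| pow_nonneg (div_nonneg (Nat.cast_nonneg _)
      (sub_nonneg.mpr (by exact_mod_cast hLN.le))) _
  have hsum : ∑ T ∈ freeComponents ξ, (#{m | Quot.mk (Linked ξ) m = T} : ℝ) ≤ N := by
    exact_mod_cast (sum_card_fiberwise_eq_card_filter univ _ _).trans_le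
      ((card_filter_le _ _).trans (card_fin N).le)
  calc wedgeL1 ξ ≤ #{I | minorDet ξ I ≠ 0} := hbound
    _ ≤ ∏ T ∈ freeComponents ξ, (#{m | Quot.mk (Linked ξ) m = T} : ℝ) := by
        exact_mod_cast card_minorDet_ne_zero_le_prod hξ
    _ ≤ (N / #(freeComponents ξ)) ^ #(freeComponents ξ) :=
        prod_le_div_card_pow _ (fun _ _ => Nat.cast_nonneg _) hsum
    _ = _ := by rw [card_freeComponents_eq hξ (mem_filter.mp hI).2, Nat.cast_sub hLN.le]

section SchinzelDelta

variable {N : ℕ}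

lemma schinzelDelta_nonneg (x : Fin N → ℝ) : 0 ≤ schinzelDelta x :=
  (sum_nonneg fun _ _ => le_max_right _ _).trans (le_max_left _ _)

lemma schinzelDelta_smul {c : ℝ} (hc : 0 ≤ c) (x : Fin N → ℝ) :
    schinzelDelta (c • x) = c * schinzelDelta x := by
  simp only [schinzelDelta, mul_max_of_nonneg _ _ hc, mul_sum, Pi.smul_apply, smul_eq_mul,
    ← mul_neg, mul_zero]

lemma eq_zero_of_schinzelDelta_eq_zero {x : Fin N → ℝ} (h : schinzelDelta x = 0) : x = 0 := by
  funext m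
  have hpos : max (x m) 0 ≤ 0 :=
    ((single_le_sum (fun i _ => le_max_right (x i) 0) (mem_univ m)).trans
      (le_max_left _ _)).trans_eq h
  have hneg : max (-x m) 0 ≤ 0 :=
    ((single_le_sum (fun i _ => le_max_right (-x i) 0) (mem_univ m)).trans
      (le_max_right _ _)).trans_eq h
  simp only [max_le_iff] at hpos hneg
  simpa using le_antisymm hpos.1 (neg_nonpos.mp hneg.1)

lemma schinzelDelta_inv_smul_self_le_one (x : Fin N → ℝ) :
    schinzelDelta ((schinzelDelta x)⁻¹ • x) ≤ 1 := by
  rw [schinzelDelta_smul (inv_nonneg.mpr (schinzelDelta_nonneg x))]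
  exact inv_mul_le_one

lemma schinzelDelta_smul_inv_smul_self (x : Fin N → ℝ) :
    schinzelDelta x • (schinzelDelta x)⁻¹ • x = x := by
  rcases eq_or_ne (schinzelDelta x) 0 with h | h
  · simp [eq_zero_of_schinzelDelta_eq_zero h]
  · exact smul_inv_smul₀ h x

end SchinzelDelta

section ConvexHull

variable {N : ℕ}

lemma finite_schE_union_schF : (schE N ∪ schF N).Finite := by
  refine (((Set.finite_range fun m : Fin N => (Pi.single m 1 : Fin N → ℝ)).union
    (Set.finite_range fun m : Fin N => -(Pi.single m 1 : Fin N → ℝ))).union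
    (Set.finite_range fun p : Fin N × Fin N =>
      (Pi.single p.1 1 - Pi.single p.2 1 : Fin N → ℝ))).subset ?_
  rintro x (⟨m, rfl | rfl⟩ | ⟨m, n, -, rfl⟩)
  · exact Or.inl (Or.inl ⟨m, rfl⟩)
  · exact Or.inl (Or.inr ⟨m, rfl⟩)
  · exact Or.inr ⟨(m, n), rfl⟩

lemma dotProduct_le_of_schinzelDelta_le_one {x φ : Fin N → ℝ} (hx : schinzelDelta x ≤ 1)
    {A B : ℝ} (hA : ∀ m, φ m ≤ A) (hB : ∀ m, -B ≤ φ m) (hA0 : 0 ≤ A) (hB0 : 0 ≤ B) :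
    x ⬝ᵥ φ ≤ A + B := by
  have hpoint : ∀ m, x m * φ m ≤ max (x m) 0 * A + max (-x m) 0 * B := fun m => by
    rcases le_total 0 (x m) with h | h
    · simp only [max_eq_left h, max_eq_right (neg_nonpos.mpr h)]
      nlinarith [hA m, hB m]
    · simp only [max_eq_right h, max_eq_left (neg_nonneg.mpr h)]
      nlinarith [hA m, hB m]
  calc x ⬝ᵥ φ ≤ ∑ m, (max (x m) 0 * A + max (-x m) 0 * B) := sum_le_sum fun m _ => hpoint m
    _ = (∑ m, max (x m) 0) * A + (∑ m, max (-x m) 0) * B := by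
        rw [sum_add_distrib, sum_mul, sum_mul]
    _ ≤ 1 * A + 1 * B := add_le_add
        (mul_le_mul_of_nonneg_right ((le_max_left _ _).trans hx) hA0)
        (mul_le_mul_of_nonneg_right ((le_max_right _ _).trans hx) hB0)
    _ = A + B := by rw [one_mul, one_mul]

/-- The dual norm of `δ` is `φ ↦ (max φ)⁺ + (min φ)⁻`, and it is attained on `E_N ∪ F_N`. -/
lemma exists_mem_schE_union_schF_forall_dotProduct_le (hN : 0 < N) (φ : Fin N → ℝ) :
    ∃ a ∈ schE N ∪ schF N, ∀ x, schinzelDelta x ≤ 1 → x ⬝ᵥ φ ≤ a ⬝ᵥ φ := by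
  have hne : (univ : Finset (Fin N)).Nonempty := univ_nonempty_iff.mpr ⟨⟨0, hN⟩⟩
  obtain ⟨m₀, -, hm₀⟩ := exists_max_image univ φ hne
  obtain ⟨m₁, -, hm₁⟩ := exists_min_image univ φ hne
  obtain ⟨a, ha, hval⟩ : ∃ a ∈ schE N ∪ schF N, a ⬝ᵥ φ = max (φ m₀) 0 + max (-φ m₁) 0 := by
    have h₀₁ := hm₁ m₀ (mem_univ _)
    rcases lt_or_ge (φ m₁) 0 with h₁ | h₁ <;> rcases lt_or_ge 0 (φ m₀) with h₀ | h₀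
    · refine ⟨_, Or.inr ⟨m₀, m₁, fun h => by rw [h] at h₀; linarith, rfl⟩, ?_⟩
      simp [max_eq_left h₀.le, max_eq_left (neg_nonneg.mpr h₁.le), sub_eq_add_neg]
    · refine ⟨_, Or.inl ⟨m₁, Or.inr rfl⟩, ?_⟩
      simp [max_eq_right h₀, max_eq_left (neg_nonneg.mpr h₁.le)]
    · refine ⟨_, Or.inl ⟨m₀, Or.inl rfl⟩, ?_⟩
      simp [max_eq_left h₀.le, max_eq_right (neg_nonpos.mpr h₁)]
    · refine ⟨_, Or.inl ⟨m₀, Or.inl rfl⟩, ?_⟩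
      simp [max_eq_right h₀, max_eq_right (neg_nonpos.mpr h₁)]
      linarith
  refine ⟨a, ha, fun x hx => hval ▸ dotProduct_le_of_schinzelDelta_le_one hx
    (fun m => (hm₀ m (mem_univ m)).trans (le_max_left _ _))
    (fun m => neg_le.mpr ((neg_le_neg (hm₁ m (mem_univ m))).trans (le_max_left _ _)))
    (le_max_right _ _) (le_max_right _ _)⟩

theorem mem_convexHull_of_schinzelDelta_le_one (hN : 0 < N) {x : Fin N → ℝ}
    (hx : schinzelDelta x ≤ 1) : x ∈ convexHull ℝ (schE N ∪ schF N) := by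
  by_contra hx'
  obtain ⟨f, u, hfu, hux⟩ := geometric_hahn_banach_closed_point (convex_convexHull ℝ _)
    (finite_schE_union_schF.isClosed_convexHull (𝕜 := ℝ)) hx'
  have hf : ∀ y, f y = y ⬝ᵥ fun i => f fun j => if i = j then 1 else 0 := fun y => by
    simpa [dotProduct] using LinearMap.pi_apply_eq_sum_univ (f : (Fin N → ℝ) →ₗ[ℝ] ℝ) y
  obtain ⟨a, ha, hle⟩ := exists_mem_schE_union_schF_forall_dotProduct_le hN
    fun i => f fun j => if i = j then 1 else 0
  have hfa := hfu a (subset_convexHull ℝ _ ha)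
  rw [hf] at hfa hux
  linarith [hle x hx]

end ConvexHull

theorem exists_forall_mem_le_of_convexOn_update {ι 𝕜 E β : Type*} [Fintype ι] [DecidableEq ι]
    [Field 𝕜] [LinearOrder 𝕜] [IsStrictOrderedRing 𝕜] [AddCommGroup E] [Module 𝕜 E]
    [AddCommGroup β] [LinearOrder β] [IsOrderedAddMonoid β] [Module 𝕜 β]
    [IsStrictOrderedModule 𝕜 β] {s : Set E} {F : (ι → E) → β}
    (hF : ∀ x i, ConvexOn 𝕜 (convexHull 𝕜 s) fun y => F (Function.update x i y))
    {x : ι → E} (hx : ∀ i, x i ∈ convexHull 𝕜 s) : ∃ a : ι → E, (∀ i, a i ∈ s) ∧ F x ≤ F a := by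
  suffices ∀ S : Finset ι, ∃ a : ι → E, (∀ i, a i ∈ convexHull 𝕜 s) ∧ (∀ i ∈ S, a i ∈ s) ∧
      F x ≤ F a by
    obtain ⟨a, -, ha, hle⟩ := this univ
    exact ⟨a, fun i => ha i (mem_univ i), hle⟩
  intro S
  induction S using Finset.induction_on with
  | empty => exact ⟨x, hx, by simp, le_rfl⟩
  | insert j S _ ih =>
    obtain ⟨a, hahull, has, hle⟩ := ih
    obtain ⟨b, hb, hab⟩ :=
      (hF a j).exists_ge_of_mem_convexHull (subset_convexHull 𝕜 s) (hahull j)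
    rw [Function.update_eq_self] at hab
    refine ⟨Function.update a j b, fun i => ?_, fun i hi => ?_, hle.trans hab⟩
    · rcases eq_or_ne i j with rfl | h
      · simpa using subset_convexHull 𝕜 s hb
      · simpa [h] using hahull i
    · rcases eq_or_ne i j with rfl | h
      · simpa using hb
      · simpa [h] using has i (by simpa [h] using hi)

section Wedge

variable {N L : ℕ}

lemma Matrix.of_update_apply_eq_updateCol {R α : Type*} {n : ℕ} (x : Fin L → α → R)
    (l : Fin L) (y : α → R) (g : Fin n → α) :
    (Matrix.of fun i j => Function.update x l y j (g i)) =
      (Matrix.of fun i j => x j (g i)).updateCol l fun i => y (g i) := by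
  ext i j
  rcases eq_or_ne j l with rfl | h <;> simp [*]

variable {R : Type*} [CommRing R]

lemma minorDet_update_add (x : Fin L → Fin N → R) (l : Fin L) (u v : Fin N → R)
    (I : Finset (Fin N)) : minorDet (Function.update x l (u + v)) I =
      minorDet (Function.update x l u) I + minorDet (Function.update x l v) I := by
  unfold minorDet
  split_ifs
  · simp only [Matrix.of_update_apply_eq_updateCol, Pi.add_apply]
    exact Matrix.det_updateCol_add _ _ _ _
  · simp

lemma minorDet_update_smul (x : Fin L → Fin N → R) (l : Fin L) (c : R) (u : Fin N → R)
    (I : Finset (Fin N)) :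
    minorDet (Function.update x l (c • u)) I = c * minorDet (Function.update x l u) I := by
  unfold minorDet
  split_ifs
  · simp only [Matrix.of_update_apply_eq_updateCol, Pi.smul_apply]
    exact Matrix.det_updateCol_smul _ _ _ _
  · simp

lemma minorDet_smul (c : Fin L → R) (x : Fin L → Fin N → R) (I : Finset (Fin N)) :
    minorDet (fun l => c l • x l) I = (∏ l, c l) * minorDet x I := by
  unfold minorDet
  split_ifs
  · exact Matrix.det_mul_row c _
  · simp

lemma wedgeL1_smul (c : Fin L → ℝ) (x : Fin L → Fin N → ℝ) :
    wedgeL1 (fun l => c l • x l) = (∏ l, |c l|) * wedgeL1 x := by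
  simp only [wedgeL1_eq_sum_abs_minorDet, minorDet_smul, abs_mul, abs_prod, mul_sum]

noncomputable def wedgeL1UpdateSeminorm (x : Fin L → Fin N → ℝ) (l : Fin L) :
    Seminorm ℝ (Fin N → ℝ) :=
  Seminorm.of (fun y => wedgeL1 (Function.update x l y))
    (fun u v => by
      simp only [wedgeL1_eq_sum_abs_minorDet, ← sum_add_distrib, minorDet_update_add]
      exact sum_le_sum fun I _ => abs_add_le _ _)
    (fun c u => by
      simp only [wedgeL1_eq_sum_abs_minorDet, minorDet_update_smul, abs_mul, mul_sum,
        Real.norm_eq_abs])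

theorem wedgeL1_le_mul_prod_schinzelDelta (hN : 0 < N) {C : ℝ}
    (hC : ∀ ξ : Fin L → Fin N → ℝ, (∀ l, ξ l ∈ schE N ∪ schF N) → wedgeL1 ξ ≤ C)
    (x : Fin L → Fin N → ℝ) : wedgeL1 x ≤ C * ∏ l, schinzelDelta (x l) := by
  set y : Fin L → Fin N → ℝ := fun l => (schinzelDelta (x l))⁻¹ • x l
  obtain ⟨a, ha, hya⟩ := exists_forall_mem_le_of_convexOn_update (F := wedgeL1)
    (fun z l => (wedgeL1UpdateSeminorm z l).convexOn.subset (Set.subset_univ _)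
      (convex_convexHull ℝ _))
    fun l => mem_convexHull_of_schinzelDelta_le_one hN (schinzelDelta_inv_smul_self_le_one (x l))
  calc wedgeL1 x = wedgeL1 fun l => schinzelDelta (x l) • y l := by
        simp only [y, schinzelDelta_smul_inv_smul_self]
    _ = (∏ l, schinzelDelta (x l)) * wedgeL1 y := by
        simp [wedgeL1_smul, abs_of_nonneg (schinzelDelta_nonneg _)]
    _ ≤ (∏ l, schinzelDelta (x l)) * C :=
        mul_le_mul_of_nonneg_left (hya.trans (hC a ha))
          (prod_nonneg fun l _ => schinzelDelta_nonneg _)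
    _ = C * ∏ l, schinzelDelta (x l) := mul_comm _ _

end Wedge

theorem stmt17_general (N L : ℕ) (h1 : L < N) :
    (∀ ξ : Fin L → Fin N → ℝ, (∀ l, ξ l ∈ schE N ∪ schF N) →
      wedgeL1 ξ ≤ ((N : ℝ) / ((N : ℝ) - (L : ℝ))) ^ (N - L)) ∧
    (∀ x : Fin L → Fin N → ℝ,
      wedgeL1 x ≤ ((N : ℝ) / ((N : ℝ) - (L : ℝ))) ^ (N - L) *
        ∏ l, schinzelDelta (x l)) :=
  ⟨fun _ => wedgeL1_le_of_forall_mem h1,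
    wedgeL1_le_mul_prod_schinzelDelta (by omega) fun _ => wedgeL1_le_of_forall_mem h1⟩

/-- If `L < N ≤ 2L` then `‖ξ₁ ∧ ⋯ ∧ ξ_L‖₁ ≤ (N/(N−L))^{N−L}` for vectors
`ξ₁,…,ξ_L ∈ E_N ∪ F_N`, and consequently
`‖x₁ ∧ ⋯ ∧ x_L‖₁ ≤ (N/(N−L))^{N−L} δ(x₁)⋯δ(x_L)` for all `x₁,…,x_L ∈ ℝ^N`. -/
theorem stmt17 (N L : ℕ) (h1 : L < N) (h2 : N ≤ 2 * L) :
    (∀ ξ : Fin L → Fin N → ℝ, (∀ l, ξ l ∈ schE N ∪ schF N) →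
      wedgeL1 ξ ≤ ((N : ℝ) / ((N : ℝ) - (L : ℝ))) ^ (N - L)) ∧
    (∀ x : Fin L → Fin N → ℝ,
      wedgeL1 x ≤ ((N : ℝ) / ((N : ℝ) - (L : ℝ))) ^ (N - L) *
        ∏ l, schinzelDelta (x l)) :=
  stmt17_general N L h1
end
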